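/- arXiv:1608.08546 — 7 statements merged into one kernel-verified Lean document; each statement's English description precedes it below -/
import Mathlib

section
/- For all n ≥ 0, the sum ∑_{k=0}^{n} k!·(2n−k)!·(k+1)/((n−k)!·(n+1)!) equals ∑_{k=0}^{n} k!·∑_{(γ₀,...,γ_k): γ₀+⋯+γ_k = n−k} ∏_{i=0}^{k} C(γ_i), where C(j) is the j-th Catalan number. -/
/-!
Both sums agree term by term. With `C = 1 + X·C²` the Catalan series, the inner sum over
compositions of `m = n - k` into `k + 1` parts is the coefficient of `X^m` in `C^(k+1)`.
Multiplying `C = 1 + X·C²` by `C^j` gives `C^(j+1) = C^j + X·C^(j+2)`, a recurrence on these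
coefficients from which the closed form `(k+1)·(2m+k)! / (m!·(m+k+1)!)` follows by induction on
`m` and then `k`.
-/

open Nat Finset PowerSeries

theorem PowerSeries.coeff_pow_eq_sum_antidiagonalTuple {R : Type*} [CommSemiring R]
    (f : PowerSeries R) (k m : ℕ) :
    coeff m (f ^ k) = ∑ γ ∈ Finset.Nat.antidiagonalTuple k m, ∏ i, coeff (γ i) f := by
  rw [← Fin.prod_const, coeff_prod, finsuppAntidiag, sum_map,
    ← piAntidiag_univ_fin_eq_antidiagonalTuple]
  exact sum_attach _ fun γ : Fin k → ℕ => ∏ i, coeff (γ i) f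

theorem catalanSeries_pow_succ (j : ℕ) :
    catalanSeries ^ (j + 1) = catalanSeries ^ j + X * catalanSeries ^ (j + 2) := by
  rw [pow_succ]
  nth_rw 2 [← catalanSeries_sq_mul_X_add_one]
  ring

theorem coeff_succ_catalanSeries_pow_succ (m j : ℕ) :
    coeff (m + 1) (catalanSeries ^ (j + 1)) =
      coeff (m + 1) (catalanSeries ^ j) + coeff m (catalanSeries ^ (j + 2)) := by
  rw [catalanSeries_pow_succ, map_add, coeff_succ_X_mul]

theorem coeff_catalanSeries_pow_mul_factorial (m k : ℕ) :
    coeff m (catalanSeries ^ (k + 1)) * (m ! * (m + k + 1)!) = (k + 1) * (2 * m + k)! := by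
  induction m generalizing k with
  | zero => simp [factorial_succ]
  | succ m ihm =>
    induction k with
    | zero =>
      have h := ihm 1
      rw [coeff_succ_catalanSeries_pow_succ, pow_zero, coeff_one, if_neg m.succ_ne_zero, zero_add,
        show 2 * (m + 1) + 0 = 2 * m + 1 + 1 by ring, factorial_succ (2 * m + 1), factorial_succ m]
      linear_combination (m + 1) * h
    | succ k ihk =>
      have h := ihm (k + 2)
      rw [show m + (k + 2) + 1 = m + k + 2 + 1 by ring, factorial_succ (m + k + 2),
        show 2 * m + (k + 2) = 2 * m + k + 2 by ring] at h
      rw [show m + 1 + k + 1 = m + k + 2 by ring, show 2 * (m + 1) + k = 2 * m + k + 2 by ring,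
        factorial_succ m] at ihk
      rw [coeff_succ_catalanSeries_pow_succ, show m + 1 + (k + 1) + 1 = m + k + 2 + 1 by ring,
        factorial_succ (m + k + 2), show 2 * (m + 1) + (k + 1) = 2 * m + k + 2 + 1 by ring,
        factorial_succ (2 * m + k + 2), factorial_succ m]
      linear_combination (m + k + 3) * ihk + (m + 1) * h

theorem sum_antidiagonalTuple_prod_catalan (k m : ℕ) :
    ∑ γ ∈ Finset.Nat.antidiagonalTuple k m, ∏ i, catalan (γ i) =
      coeff m (catalanSeries ^ k) := by
  simp only [coeff_pow_eq_sum_antidiagonalTuple, catalanSeries_coeff]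

theorem cast_coeff_catalanSeries_pow (m k : ℕ) :
    ((coeff m (catalanSeries ^ (k + 1)) : ℕ) : ℚ) =
      (k + 1) * (2 * m + k)! / (m ! * (m + k + 1)!) := by
  rw [eq_div_iff (by positivity)]
  exact_mod_cast coeff_catalanSeries_pow_mul_factorial m k

/-- The two formulas for the number of vertices of the `n`-dimensional pterahedron agree:
`∑ k, k!·(2n−k)!·(k+1)/((n−k)!·(n+1)!)` equals `∑ k, k! · ∑_{γ₀+⋯+γ_k = n−k} ∏ C(γᵢ)`. -/
theorem pterahedron_vertex_count_formulas (n : ℕ) :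
    ∑ k ∈ range (n + 1),
        (k ! : ℚ) * (2 * n - k)! * (k + 1) / ((n - k)! * (n + 1)!) =
      ∑ k ∈ range (n + 1),
        (k ! : ℚ) *
          ∑ γ ∈ Finset.Nat.antidiagonalTuple (k + 1) (n - k),
            ∏ i, (catalan (γ i) : ℚ) := by
  refine sum_congr rfl fun k hk => ?_
  obtain ⟨m, rfl⟩ := exists_add_of_le (mem_range_succ_iff.1 hk)
  simp only [← Nat.cast_prod, ← Nat.cast_sum, sum_antidiagonalTuple_prod_catalan,
    cast_coeff_catalanSeries_pow, Nat.add_sub_cancel_left,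
    show 2 * (k + m) - k = 2 * m + k by omega, show k + m + 1 = m + k + 1 by ring]
  ring
end

section
/- The ballot number B(n,k) = (2n−k)!·(k+1)/((n−k)!·(n+1)!) equals the number of weak compositions (γ₀,...,γ_k) of n−k into k+1 nonnegative parts weighted by ∏_{i=0}^k C(γ_i); equivalently, ∑_{γ₀+⋯+γ_k = n−k} ∏_{i=0}^{k} C(γ_i) = (2n−k)!·(k+1)/((n−k)!·(n+1)!) for 0 ≤ k ≤ n. -/
/-!
With `C(x) = ∑ₘ C(m) xᵐ`, the sum is the coefficient of `x^(n-k)` in `C(x)^(k+1)`.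
The functional equation `C = 1 + x C²` gives `C^(j+1) = C^j + x C^(j+2)`, so these coefficients
satisfy a recurrence expressing the `(j+2)`-nd power through the `j`-th and `(j+1)`-st.
The ballot numbers satisfy the same recurrence and agree with the coefficients of `C` and `C²`
(both Catalan numbers), hence they agree everywhere.
-/

open scoped Nat

theorem Finset.Nat.sum_antidiagonalTuple_succ {M : Type*} [AddCommMonoid M] (k n : ℕ)
    (f : (Fin (k + 1) → ℕ) → M) :
    ∑ γ ∈ antidiagonalTuple (k + 1) n, f γ =
      ∑ p ∈ antidiagonal n, ∑ δ ∈ antidiagonalTuple k p.2, f (Fin.cons p.1 δ) := by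
  rw [Finset.sum_sigma']
  refine (Finset.sum_nbij' (fun p => Fin.cons p.1.1 p.2)
    (fun γ => ⟨(γ 0, ∑ i : Fin k, γ i.succ), Fin.tail γ⟩) ?_ ?_ ?_ ?_ ?_).symm
  · rintro ⟨⟨a, b⟩, δ⟩ hp
    simp_all [mem_antidiagonalTuple, Fin.sum_cons]
  · intro γ hγ
    simp_all [mem_antidiagonalTuple, Fin.sum_univ_succ, Fin.tail]
  · rintro ⟨⟨a, b⟩, δ⟩ hp
    simp_all [mem_antidiagonalTuple]
  · intro γ _
    simp
  · intro _ _
    rfl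

theorem Nat.cast_catalan_eq_factorial_div {K : Type*} [Field K] [CharZero K] (m : ℕ) :
    (catalan m : K) = (2 * m)! / (m ! * (m + 1)!) := by
  have hcentral : ((m + 1 : ℕ) : K) * catalan m = (2 * m)! / (m ! * m !) := by
    rw [← Nat.cast_mul, succ_mul_catalan_eq_centralBinom, centralBinom_eq_two_mul_choose,
      Nat.cast_choose K (by omega : m ≤ 2 * m), show 2 * m - m = m by omega]
  rw [eq_div_iff (by simp [Nat.factorial_ne_zero])] at hcentral
  rw [eq_div_iff (by simp [Nat.factorial_ne_zero]), Nat.factorial_succ]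
  push_cast at hcentral ⊢
  linear_combination hcentral

namespace PowerSeries

theorem coeff_pow_eq_sum_antidiagonalTuple_s2 {R : Type*} [CommSemiring R]
    (p : PowerSeries R) (k n : ℕ) :
    coeff n (p ^ k) = ∑ γ ∈ Finset.Nat.antidiagonalTuple k n, ∏ i, coeff (γ i) p := by
  induction k generalizing n with
  | zero => cases n <;> simp [coeff_one]
  | succ k ih =>
    rw [pow_succ', coeff_mul, Finset.Nat.sum_antidiagonalTuple_succ]
    simp only [ih, Finset.mul_sum, Fin.prod_univ_succ, Fin.cons_zero, Fin.cons_succ]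

theorem catalanSeries_pow_succ (j : ℕ) :
    catalanSeries ^ (j + 1) = catalanSeries ^ j + X * catalanSeries ^ (j + 2) := by
  calc catalanSeries ^ (j + 1) = catalanSeries ^ j * (catalanSeries ^ 2 * X + 1) := by
        rw [catalanSeries_sq_mul_X_add_one, pow_succ]
    _ = catalanSeries ^ j + X * catalanSeries ^ (j + 2) := by ring

theorem coeff_succ_catalanSeries_pow_succ (j m : ℕ) :
    coeff (m + 1) (catalanSeries ^ (j + 1)) =
      coeff (m + 1) (catalanSeries ^ j) + coeff m (catalanSeries ^ (j + 2)) := by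
  rw [catalanSeries_pow_succ, map_add, coeff_succ_X_mul]

end PowerSeries

/-- `ballot j m` is the ballot number `B(m + j, j)`. -/
noncomputable def ballot (j m : ℕ) : ℚ :=
  (2 * m + j)! * (j + 1) / (m ! * (m + j + 1)!)

theorem ballot_zero (m : ℕ) : ballot 0 m = catalan m := by
  simp [ballot, Nat.cast_catalan_eq_factorial_div]

theorem ballot_one (m : ℕ) : ballot 1 m = catalan (m + 1) := by
  rw [ballot, Nat.cast_catalan_eq_factorial_div]
  push_cast [Nat.factorial_succ, mul_add, mul_one]
  field_simp
  ring

theorem ballot_add_two (j m : ℕ) :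
    ballot (j + 2) m = ballot (j + 1) (m + 1) - ballot j (m + 1) := by
  rw [ballot, ballot, ballot, show 2 * (m + 1) + (j + 1) = 2 * m + (j + 2) + 1 by ring,
    show m + 1 + (j + 1) + 1 = m + (j + 2) + 1 by ring,
    show 2 * (m + 1) + j = 2 * m + (j + 2) by ring,
    show m + 1 + j + 1 = m + (j + 2) by ring]
  push_cast [Nat.factorial_succ]
  field_simp
  ring

theorem PowerSeries.coeff_catalanSeries_pow_succ (j m : ℕ) :
    ((coeff m (catalanSeries ^ (j + 1)) : ℕ) : ℚ) = ballot j m := by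
  induction j using Nat.twoStepInduction generalizing m with
  | zero => simp [ballot_zero]
  | one =>
    have h := coeff_succ_catalanSeries_pow_succ 0 m
    simp only [pow_zero, coeff_one, if_neg m.succ_ne_zero, zero_add, pow_one,
      catalanSeries_coeff] at h
    rw [ballot_one, h]
  | more j ih₀ ih₁ =>
    rw [ballot_add_two, ← ih₀, ← ih₁, coeff_succ_catalanSeries_pow_succ (j + 1) m]
    push_cast
    ring

/-- The ballot number `B(n,k) = (2n−k)!·(k+1)/((n−k)!·(n+1)!)` equals the sum over all
weak compositions `(γ₀,…,γ_k)` of `n−k` into `k+1` nonnegative parts of `∏ C(γᵢ)`,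
where `C` is the Catalan number. -/
theorem ballot_number_eq_sum_catalan_products (n k : ℕ) (h : k ≤ n) :
    ∑ γ ∈ Finset.Nat.antidiagonalTuple (k + 1) (n - k), ∏ i, (catalan (γ i) : ℚ) =
      ((2 * n - k)! : ℚ) * (k + 1) / ((n - k)! * (n + 1)!) := by
  have hballot : ballot k (n - k) = ((2 * n - k)! : ℚ) * (k + 1) / ((n - k)! * (n + 1)!) := by
    rw [ballot, show 2 * (n - k) + k = 2 * n - k by omega, show n - k + k + 1 = n + 1 by omega]
  rw [← hballot, ← PowerSeries.coeff_catalanSeries_pow_succ,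
    PowerSeries.coeff_pow_eq_sum_antidiagonalTuple_s2]
  simp
end

section
/- The number of tubes of the fan graph F_{m,n} is n(n+1)/2 + (2^m − 1)(2^n − 1) + m − 1. -/
/-- The fan graph `F_{m,n}`: the join of the edgeless graph on `m` nodes with the
path graph on `n` nodes. -/
def fanGraph (m n : ℕ) : SimpleGraph (Fin m ⊕ Fin n) :=
  SimpleGraph.fromRel fun x y =>
    match x, y with
    | Sum.inl _, Sum.inr _ => True
    | Sum.inr i, Sum.inr j => (i : ℕ) + 1 = (j : ℕ)
    | _, _ => False

/-- A tube of a graph: a nonempty proper subset of vertices inducing a connected subgraph. -/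
def IsTube {V : Type*} (G : SimpleGraph V) (s : Set V) : Prop :=
  s.Nonempty ∧ s ≠ Set.univ ∧ (G.induce s).Connected

variable {m n : ℕ}

lemma fan_adj_inl_inr (a : Fin m) (b : Fin n) :
    (fanGraph m n).Adj (Sum.inl a) (Sum.inr b) := by
  simp [fanGraph, SimpleGraph.fromRel_adj]

lemma fan_adj_inr_inr {a b : Fin n} (h : (a : ℕ) + 1 = b) :
    (fanGraph m n).Adj (Sum.inr a) (Sum.inr b) := by
  have : a ≠ b := by intro e; subst e; omega
  simp [fanGraph, SimpleGraph.fromRel_adj, this, h]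

lemma fan_adj_inr_inr_iff {a b : Fin n} :
    (fanGraph m n).Adj (Sum.inr a) (Sum.inr b) ↔ ((a : ℕ) + 1 = b ∨ (b : ℕ) + 1 = a) := by
  constructor
  · intro h
    rw [show fanGraph m n = SimpleGraph.fromRel _ from rfl, SimpleGraph.fromRel_adj] at h
    exact h.2
  · rintro (h | h)
    · exact fan_adj_inr_inr h
    · exact (fan_adj_inr_inr h).symm

lemma fan_not_adj_inl_inl (a b : Fin m) :
    ¬ (fanGraph m n).Adj (Sum.inl a) (Sum.inl b) := by
  simp [fanGraph, SimpleGraph.fromRel_adj]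

open SimpleGraph

lemma connected_of_mixed {s : Set (Fin m ⊕ Fin n)} (ha : ∃ a, Sum.inl a ∈ s)
    (hb : ∃ b, Sum.inr b ∈ s) : ((fanGraph m n).induce s).Connected := by
  obtain ⟨a, ha⟩ := ha
  obtain ⟨b, hb⟩ := hb
  rw [SimpleGraph.connected_iff]
  have key : ∀ v : s, ((fanGraph m n).induce s).Reachable v ⟨Sum.inr b, hb⟩ := by
    rintro ⟨(c | d), hv⟩
    · exact SimpleGraph.Adj.reachable (by exact fan_adj_inl_inr c b)
    · exact (SimpleGraph.Adj.reachable
        (show ((fanGraph m n).induce s).Adj ⟨Sum.inr d, hv⟩ ⟨Sum.inl a, ha⟩ from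
          (fan_adj_inl_inr a d).symm)).trans
        (SimpleGraph.Adj.reachable (show ((fanGraph m n).induce s).Adj ⟨Sum.inl a, ha⟩
          ⟨Sum.inr b, hb⟩ from fan_adj_inl_inr a b))
  exact ⟨fun u v => (key u).trans (key v).symm, ⟨⟨Sum.inr b, hb⟩⟩⟩

lemma reach_up (s : Set (Fin m ⊕ Fin n)) (a : Fin n) :
    ∀ (d : ℕ) (c : Fin n), (c : ℕ) = a + d →
      (∀ k : Fin n, a ≤ k → k ≤ c → Sum.inr k ∈ s) →
      ∀ (hain : Sum.inr a ∈ s) (hcin : Sum.inr c ∈ s),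
      ((fanGraph m n).induce s).Reachable ⟨Sum.inr a, hain⟩ ⟨Sum.inr c, hcin⟩ := by
  intro d
  induction d with
  | zero =>
    intro c hc _ ha hc'
    have : a = c := Fin.ext (by omega)
    subst this
    rfl
  | succ d ih =>
    intro c hc hsub ha hcin
    have hlt : (a : ℕ) + d < n := by have := c.isLt; omega
    set c' : Fin n := ⟨a + d, hlt⟩ with hc'def
    have h1 : a ≤ c' := by simp [Fin.le_def, hc'def]
    have h2 : c' ≤ c := by simp [Fin.le_def, hc'def]; omega
    have hc'in : Sum.inr c' ∈ s := hsub c' h1 h2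
    refine (ih c' rfl (fun k hk1 hk2 => hsub k hk1 (le_trans hk2 h2)) ha hc'in).trans
      (SimpleGraph.Adj.reachable ?_)
    exact fan_adj_inr_inr (show (c' : ℕ) + 1 = c by simp [hc'def]; omega)

lemma interval_connected (a b : Fin n) (hab : a ≤ b) :
    ((fanGraph m n).induce (Sum.inr '' Set.Icc a b)).Connected := by
  set s : Set (Fin m ⊕ Fin n) := Sum.inr '' Set.Icc a b with hsdef
  have hain : Sum.inr a ∈ s := ⟨a, ⟨le_refl a, hab⟩, rfl⟩
  rw [SimpleGraph.connected_iff]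
  have key : ∀ v : s, ((fanGraph m n).induce s).Reachable ⟨Sum.inr a, hain⟩ v := by
    rintro ⟨x, hx⟩
    obtain ⟨c, ⟨hc1, hc2⟩, rfl⟩ := hx
    exact reach_up s a ((c : ℕ) - a) c (by have := Fin.le_def.mp hc1; omega)
      (fun k hk1 hk2 => ⟨k, ⟨hk1, le_trans hk2 hc2⟩, rfl⟩) hain ⟨c, ⟨hc1, hc2⟩, rfl⟩
  exact ⟨fun u v => (key u).symm.trans (key v), ⟨⟨Sum.inr a, hain⟩⟩⟩

lemma walk_ivt {s : Set (Fin m ⊕ Fin n)} (hs : ∀ x ∈ s, ∃ c : Fin n, x = Sum.inr c)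
    {x y : s} (w : ((fanGraph m n).induce s).Walk x y) :
    ∀ (i j k : Fin n), x.1 = Sum.inr i → y.1 = Sum.inr j → i ≤ k → k ≤ j → Sum.inr k ∈ s := by
  induction w with
  | nil =>
    intro i j k hx hy h1 h2
    rename_i u
    rw [hx] at hy
    have : i = j := by exact Sum.inr_injective hy
    subst this
    have : k = i := le_antisymm h2 h1
    subst this
    rw [← hx]; exact u.2
  | cons h p ih =>
    rename_i u v w'
    intro i j k hx hy h1 h2
    by_cases hk : k = i
    · subst hk; rw [← hx]; exact u.2
    · have hik : (i : ℕ) < (k : ℕ) := by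
        rcases lt_or_eq_of_le h1 with h | h
        · exact h
        · exact absurd h.symm hk
      obtain ⟨i', hi'⟩ := hs v.1 v.2
      have adj' : (fanGraph m n).Adj u.1 v.1 := h
      rw [hx, hi', fan_adj_inr_inr_iff] at adj'
      rcases adj' with h' | h'
      · exact ih i' j k hi' hy (by rw [Fin.le_def]; omega) h2
      · exact ih i' j k hi' hy (by rw [Fin.le_def]; omega) h2

lemma inr_only_interval {s : Set (Fin m ⊕ Fin n)} (hne : s.Nonempty)
    (hs : ∀ x ∈ s, ∃ c : Fin n, x = Sum.inr c)
    (hc : ((fanGraph m n).induce s).Connected) :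
    ∃ a b : Fin n, a ≤ b ∧ s = Sum.inr '' Set.Icc a b := by
  classical
  set t : Finset (Fin n) := (Set.toFinite (Sum.inr ⁻¹' s)).toFinset with htdef
  have htmem : ∀ c : Fin n, c ∈ t ↔ Sum.inr c ∈ s := by
    intro c; simp [htdef]
  have htne : t.Nonempty := by
    obtain ⟨x, hx⟩ := hne
    obtain ⟨c, rfl⟩ := hs x hx
    exact ⟨c, (htmem c).mpr hx⟩
  set a := t.min' htne with hadef
  set b := t.max' htne with hbdef
  have hab : a ≤ b := t.min'_le b (t.max'_mem htne)
  have has : Sum.inr a ∈ s := (htmem a).mp (t.min'_mem htne)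
  have hbs : Sum.inr b ∈ s := (htmem b).mp (t.max'_mem htne)
  refine ⟨a, b, hab, Set.Subset.antisymm ?_ ?_⟩
  · intro x hx
    obtain ⟨c, rfl⟩ := hs x hx
    exact ⟨c, ⟨t.min'_le c ((htmem c).mpr hx), t.le_max' c ((htmem c).mpr hx)⟩, rfl⟩
  · rintro x ⟨c, ⟨hc1, hc2⟩, rfl⟩
    obtain ⟨w⟩ := hc.preconnected ⟨Sum.inr a, has⟩ ⟨Sum.inr b, hbs⟩
    exact walk_ivt hs w a b c rfl rfl hc1 hc2

lemma inl_only_singleton {s : Set (Fin m ⊕ Fin n)} (hne : s.Nonempty)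
    (hs : ∀ x ∈ s, ∃ a : Fin m, x = Sum.inl a)
    (hc : ((fanGraph m n).induce s).Connected) :
    ∃ a : Fin m, s = {Sum.inl a} := by
  have nostep : ∀ {x y : s} (_ : ((fanGraph m n).induce s).Walk x y), x = y := by
    intro x y w
    cases w with
    | nil => rfl
    | cons h p =>
      exfalso
      rename_i v
      obtain ⟨c, hcx⟩ := hs x.1 x.2
      obtain ⟨d, hdv⟩ := hs v.1 v.2
      have adj' : (fanGraph m n).Adj x.1 v.1 := h
      rw [hcx, hdv] at adj'
      exact fan_not_adj_inl_inl c d adj'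
  obtain ⟨x, hx⟩ := hne
  obtain ⟨a, rfl⟩ := hs x hx
  refine ⟨a, Set.Subset.antisymm ?_ (by simpa using hx)⟩
  intro y hy
  obtain ⟨w⟩ := hc.preconnected ⟨y, hy⟩ ⟨Sum.inl a, hx⟩
  have := nostep w
  simpa using congrArg Subtype.val this

lemma singleton_connected (x : Fin m ⊕ Fin n) :
    ((fanGraph m n).induce {x}).Connected := by
  rw [SimpleGraph.connected_iff]
  refine ⟨fun u v => ?_, ⟨⟨x, rfl⟩⟩⟩
  have : u = v := Subtype.ext (by rw [u.2, v.2])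
  subst this; rfl

lemma count_le_pairs (n : ℕ) :
    {p : Fin n × Fin n | p.1 ≤ p.2}.ncard = n * (n + 1) / 2 := by
  classical
  rw [Set.ncard_eq_toFinset_card', Set.toFinset_setOf]
  rw [Finset.card_filter, Fintype.sum_prod_type]
  have h1 : ∀ a : Fin n, (∑ b : Fin n, if a ≤ b then 1 else 0) = n - (a : ℕ) := by
    intro a
    rw [← Finset.card_filter]
    rw [show Finset.univ.filter (fun b => a ≤ b) = Finset.Ici a from
      Finset.ext fun b => by simp]
    exact Fin.card_Ici a
  simp only [h1]
  rw [Fin.sum_univ_eq_sum_range (fun i => n - i)]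
  rw [← Finset.sum_range_reflect]
  have h2 : ∑ j ∈ Finset.range n, (n - (n - 1 - j)) = ∑ j ∈ Finset.range n, (j + 1) := by
    apply Finset.sum_congr rfl
    intro j hj
    have := Finset.mem_range.mp hj
    omega
  rw [h2]
  have h3 : ∑ j ∈ Finset.range n, (j + 1) = ∑ j ∈ Finset.range (n + 1), j := by
    rw [Finset.sum_range_succ' (fun i => i) n]
    simp
  rw [h3, Finset.sum_range_id, Nat.add_sub_cancel, Nat.mul_comm]

lemma card_set_fin (m : ℕ) : Nat.card (Set (Fin m)) = 2 ^ m := by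
  rw [Nat.card_eq_fintype_card, Fintype.card_set, Fintype.card_fin]

lemma count_nonempty_sets (m : ℕ) :
    {s : Set (Fin m) | s.Nonempty}.ncard = 2 ^ m - 1 := by
  have h : {s : Set (Fin m) | s.Nonempty} = Set.univ \ {∅} := by
    ext s; simp [Set.nonempty_iff_ne_empty]
  rw [h, Set.ncard_diff_singleton_of_mem (Set.mem_univ _), Set.ncard_univ, card_set_fin]

lemma ncard_prod {α β : Type*} (A : Set α) (B : Set β) :
    (A ×ˢ B).ncard = A.ncard * B.ncard := by
  rw [← Nat.card_coe_set_eq, ← Nat.card_coe_set_eq, ← Nat.card_coe_set_eq,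
    ← Nat.card_prod]
  exact Nat.card_congr (Equiv.Set.prod A B)

lemma tube_iff (hm : 1 ≤ m) (hn : 1 ≤ n) (s : Set (Fin m ⊕ Fin n)) :
    IsTube (fanGraph m n) s ↔
      (∃ p : Fin n × Fin n, p.1 ≤ p.2 ∧ s = Sum.inr '' Set.Icc p.1 p.2) ∨
      (∃ a : Fin m, s = {Sum.inl a}) ∨
      ((∃ a, Sum.inl a ∈ s) ∧ (∃ b, Sum.inr b ∈ s) ∧ s ≠ Set.univ) := by
  constructor
  · rintro ⟨hne, hproper, hconn⟩
    by_cases hL : ∃ a, Sum.inl a ∈ s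
    · by_cases hR : ∃ b, Sum.inr b ∈ s
      · exact Or.inr (Or.inr ⟨hL, hR, hproper⟩)
      · refine Or.inr (Or.inl ?_)
        apply inl_only_singleton hne ?_ hconn
        rintro (a | b) hx
        · exact ⟨a, rfl⟩
        · exact absurd ⟨b, hx⟩ hR
    · refine Or.inl ?_
      have hs : ∀ x ∈ s, ∃ c : Fin n, x = Sum.inr c := by
        rintro (a | b) hx
        · exact absurd ⟨a, hx⟩ hL
        · exact ⟨b, rfl⟩
      obtain ⟨a, b, hab, hs'⟩ := inr_only_interval hne hs hconn
      exact ⟨(a, b), hab, hs'⟩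
  · rintro (⟨⟨a, b⟩, hab, rfl⟩ | ⟨a, rfl⟩ | ⟨hL, hR, hproper⟩)
    · refine ⟨⟨Sum.inr a, a, ⟨le_refl a, hab⟩, rfl⟩, ?_, interval_connected a b hab⟩
      intro h
      have : (Sum.inl ⟨0, hm⟩ : Fin m ⊕ Fin n) ∈ Sum.inr '' Set.Icc a b := h ▸ Set.mem_univ _
      obtain ⟨c, -, hc⟩ := this
      exact Sum.inl_ne_inr hc.symm
    · refine ⟨⟨Sum.inl a, rfl⟩, ?_, singleton_connected _⟩
      intro h
      have : (Sum.inr ⟨0, hn⟩ : Fin m ⊕ Fin n) ∈ ({Sum.inl a} : Set _) := h ▸ Set.mem_univ _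
      simp at this
    · obtain ⟨a, ha⟩ := hL
      exact ⟨⟨Sum.inl a, ha⟩, hproper, connected_of_mixed ⟨a, ha⟩ hR⟩

lemma ncard_S1 : {s : Set (Fin m ⊕ Fin n) |
    ∃ p : Fin n × Fin n, p.1 ≤ p.2 ∧ s = Sum.inr '' Set.Icc p.1 p.2}.ncard
      = n * (n + 1) / 2 := by
  have heq : {s : Set (Fin m ⊕ Fin n) |
      ∃ p : Fin n × Fin n, p.1 ≤ p.2 ∧ s = Sum.inr '' Set.Icc p.1 p.2}
      = (fun p : Fin n × Fin n => Sum.inr '' Set.Icc p.1 p.2) '' {p | p.1 ≤ p.2} := by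
    ext s
    simp only [Set.mem_setOf_eq, Set.mem_image, eq_comm]
  rw [heq, Set.ncard_image_of_injOn, count_le_pairs]
  rintro ⟨a, b⟩ hab ⟨c, d⟩ hcd h
  simp only [Set.mem_setOf_eq] at hab hcd
  have hIcc : Set.Icc a b = Set.Icc c d :=
    (Set.image_eq_image Sum.inr_injective).mp h
  have h1 : a ∈ Set.Icc c d := hIcc ▸ Set.mem_Icc.mpr ⟨le_refl a, hab⟩
  have h2 : c ∈ Set.Icc a b := hIcc.symm ▸ Set.mem_Icc.mpr ⟨le_refl c, hcd⟩
  have h3 : b ∈ Set.Icc c d := hIcc ▸ Set.mem_Icc.mpr ⟨hab, le_refl b⟩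
  have h4 : d ∈ Set.Icc a b := hIcc.symm ▸ Set.mem_Icc.mpr ⟨hcd, le_refl d⟩
  simp only [Set.mem_Icc] at h1 h2 h3 h4
  exact Prod.ext (le_antisymm h2.1 h1.1) (le_antisymm h3.2 h4.2)

lemma ncard_S2 : {s : Set (Fin m ⊕ Fin n) | ∃ a : Fin m, s = {Sum.inl a}}.ncard = m := by
  have heq : {s : Set (Fin m ⊕ Fin n) | ∃ a : Fin m, s = {Sum.inl a}}
      = (fun a : Fin m => ({Sum.inl a} : Set (Fin m ⊕ Fin n))) '' Set.univ := by
    ext s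
    simp only [Set.mem_setOf_eq, Set.image_univ, Set.mem_range, eq_comm]
  rw [heq, Set.ncard_image_of_injOn, Set.ncard_univ, Nat.card_eq_fintype_card,
    Fintype.card_fin]
  intro a _ b _ h
  have : (Sum.inl a : Fin m ⊕ Fin n) = Sum.inl b := by
    rw [← Set.singleton_eq_singleton_iff]; exact h
  exact Sum.inl_injective this

lemma ncard_S3 (hm : 1 ≤ m) (hn : 1 ≤ n) :
    {s : Set (Fin m ⊕ Fin n) |
      (∃ a, Sum.inl a ∈ s) ∧ (∃ b, Sum.inr b ∈ s) ∧ s ≠ Set.univ}.ncard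
      = (2 ^ m - 1) * (2 ^ n - 1) - 1 := by
  haveI : Nonempty (Fin m) := ⟨⟨0, hm⟩⟩
  haveI : Nonempty (Fin n) := ⟨⟨0, hn⟩⟩
  set F : Set (Fin m) × Set (Fin n) → Set (Fin m ⊕ Fin n) :=
    fun p => Sum.inl '' p.1 ∪ Sum.inr '' p.2 with hFdef
  have hmemL : ∀ (p : Set (Fin m) × Set (Fin n)) (a : Fin m), Sum.inl a ∈ F p ↔ a ∈ p.1 := by
    intro p a; simp [hFdef]
  have hmemR : ∀ (p : Set (Fin m) × Set (Fin n)) (b : Fin n), Sum.inr b ∈ F p ↔ b ∈ p.2 := by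
    intro p b; simp [hFdef]
  have hFinj : Function.Injective F := by
    intro p q h
    refine Prod.ext ?_ ?_
    · ext a
      rw [← hmemL p a, ← hmemL q a, h]
    · ext b
      rw [← hmemR p b, ← hmemR q b, h]
  have hFuniv : ∀ p, F p = Set.univ ↔ p = (Set.univ, Set.univ) := by
    intro p
    constructor
    · intro h
      refine Prod.ext ?_ ?_
      · ext a
        simp only [Set.mem_univ, iff_true]
        rw [← hmemL p a, h]; exact Set.mem_univ _
      · ext b
        simp only [Set.mem_univ, iff_true]
        rw [← hmemR p b, h]; exact Set.mem_univ _
    · rintro rfl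
      ext (a | b) <;> simp [hFdef]
  have heq : {s : Set (Fin m ⊕ Fin n) |
      (∃ a, Sum.inl a ∈ s) ∧ (∃ b, Sum.inr b ∈ s) ∧ s ≠ Set.univ}
      = F '' (({s : Set (Fin m) | s.Nonempty} ×ˢ {s : Set (Fin n) | s.Nonempty})
          \ {(Set.univ, Set.univ)}) := by
    ext s
    simp only [Set.mem_setOf_eq, Set.mem_image, Set.mem_diff, Set.mem_prod,
      Set.mem_singleton_iff]
    constructor
    · rintro ⟨⟨a, ha⟩, ⟨b, hb⟩, hne⟩
      refine ⟨(Sum.inl ⁻¹' s, Sum.inr ⁻¹' s), ⟨⟨⟨a, ha⟩, ⟨b, hb⟩⟩, ?_⟩, ?_⟩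
      · intro h
        apply hne
        have hs : s = F (Sum.inl ⁻¹' s, Sum.inr ⁻¹' s) := by
          ext (x | y) <;> simp [hFdef]
        rw [hs, h, (hFuniv _).mpr rfl]
      · ext (x | y) <;> simp [hFdef]
    · rintro ⟨p, ⟨⟨⟨a, ha⟩, ⟨b, hb⟩⟩, hp⟩, rfl⟩
      refine ⟨⟨a, (hmemL p a).mpr ha⟩, ⟨b, (hmemR p b).mpr hb⟩, ?_⟩
      intro h
      exact hp ((hFuniv p).mp h)
  rw [heq, Set.ncard_image_of_injOn (Function.Injective.injOn hFinj)]
  rw [Set.ncard_diff_singleton_of_mem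
    (by exact ⟨Set.univ_nonempty, Set.univ_nonempty⟩)]
  rw [ncard_prod, count_nonempty_sets, count_nonempty_sets]


/-- The number of tubes of the fan graph `F_{m,n}` is
`n(n+1)/2 + (2^m − 1)(2^n − 1) + m − 1`. -/
theorem card_tubes_fanGraph (m n : ℕ) (hm : 1 ≤ m) (hn : 1 ≤ n) :
    Nat.card {s : Set (Fin m ⊕ Fin n) // IsTube (fanGraph m n) s} =
      n * (n + 1) / 2 + (2 ^ m - 1) * (2 ^ n - 1) + m - 1 := by
  have h0 : Nat.card {s : Set (Fin m ⊕ Fin n) // IsTube (fanGraph m n) s}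
      = {s : Set (Fin m ⊕ Fin n) | IsTube (fanGraph m n) s}.ncard :=
    (Nat.card_coe_set_eq _).symm.trans rfl
  rw [h0]
  have hsets : {s : Set (Fin m ⊕ Fin n) | IsTube (fanGraph m n) s}
      = {s : Set (Fin m ⊕ Fin n) |
          ∃ p : Fin n × Fin n, p.1 ≤ p.2 ∧ s = Sum.inr '' Set.Icc p.1 p.2}
        ∪ ({s : Set (Fin m ⊕ Fin n) | ∃ a : Fin m, s = {Sum.inl a}}
        ∪ {s : Set (Fin m ⊕ Fin n) |
            (∃ a, Sum.inl a ∈ s) ∧ (∃ b, Sum.inr b ∈ s) ∧ s ≠ Set.univ}) := by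
    ext s
    simp only [Set.mem_union, Set.mem_setOf_eq]
    exact tube_iff hm hn s
  rw [hsets]
  have hd23 : Disjoint {s : Set (Fin m ⊕ Fin n) | ∃ a : Fin m, s = {Sum.inl a}}
      {s : Set (Fin m ⊕ Fin n) |
        (∃ a, Sum.inl a ∈ s) ∧ (∃ b, Sum.inr b ∈ s) ∧ s ≠ Set.univ} := by
    rw [Set.disjoint_left]
    rintro s ⟨a, rfl⟩ ⟨-, ⟨b, hb⟩, -⟩
    simp at hb
  have hd123 : Disjoint {s : Set (Fin m ⊕ Fin n) |
      ∃ p : Fin n × Fin n, p.1 ≤ p.2 ∧ s = Sum.inr '' Set.Icc p.1 p.2}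
      ({s : Set (Fin m ⊕ Fin n) | ∃ a : Fin m, s = {Sum.inl a}}
        ∪ {s : Set (Fin m ⊕ Fin n) |
            (∃ a, Sum.inl a ∈ s) ∧ (∃ b, Sum.inr b ∈ s) ∧ s ≠ Set.univ}) := by
    rw [Set.disjoint_left]
    rintro s ⟨⟨a, b⟩, hab, rfl⟩ (⟨c, hc⟩ | ⟨⟨c, hc⟩, -, -⟩)
    · have : (Sum.inr a : Fin m ⊕ Fin n) ∈ Sum.inr '' Set.Icc a b :=
        ⟨a, ⟨le_refl a, hab⟩, rfl⟩
      rw [hc] at this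
      simp at this
    · obtain ⟨d, -, hd⟩ := hc
      exact Sum.inl_ne_inr hd.symm
  rw [Set.ncard_union_eq hd123, Set.ncard_union_eq hd23, ncard_S1, ncard_S2, ncard_S3 hm hn]
  have hA : 1 ≤ (2 ^ m - 1) * (2 ^ n - 1) := by
    have h2m : 2 ≤ 2 ^ m := by
      calc 2 = 2 ^ 1 := rfl
      _ ≤ 2 ^ m := Nat.pow_le_pow_right (by norm_num) hm
    have h2n : 2 ≤ 2 ^ n := by
      calc 2 = 2 ^ 1 := rfl
      _ ≤ 2 ^ n := Nat.pow_le_pow_right (by norm_num) hn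
    exact Nat.one_le_iff_ne_zero.mpr (Nat.mul_ne_zero (by omega) (by omega))
  omega
end

section
/- The number of tubes of the fan graph F_{1,n} (the pterahedron's underlying graph) is n(n+1)/2 + 2^n − 1. -/
open SimpleGraph Set Sum

namespace SimpleGraph

variable {V W : Type*}

lemma induce_connected_of_forall_adj {G : SimpleGraph V} {s : Set V} {v : V} (hv : v ∈ s)
    (h : ∀ w ∈ s, w ≠ v → G.Adj v w) : (G.induce s).Connected := by
  have reach : ∀ w : s, (G.induce s).Reachable ⟨v, hv⟩ w := fun ⟨w, hw⟩ ↦ by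
    by_cases hwv : w = v
    · subst hwv; rfl
    · exact Adj.reachable (h w hw hwv)
  exact (connected_iff _).2 ⟨fun u w ↦ (reach u).symm.trans (reach w), ⟨⟨v, hv⟩⟩⟩

noncomputable def Embedding.induceImageIso {G : SimpleGraph V} {H : SimpleGraph W} (f : H ↪g G)
    (t : Set W) : H.induce t ≃g G.induce (f '' t) where
  toEquiv := Equiv.Set.image f t f.injective
  map_rel_iff' := by simp

variable {α : Type*}

lemma hasse_induce_eq_hasse [Preorder α] (s : Set α) [s.OrdConnected] :
    (hasse α).induce s = hasse s := by
  ext a b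
  have h (x y : s) := OrdConnected.apply_covBy_apply_iff (OrderEmbedding.subtype (· ∈ s))
    (a := x) (b := y) (by simpa using ‹s.OrdConnected›)
  simp only [comap_adj, hasse_adj, Function.Embedding.subtype_apply]
  simpa using or_congr (h a b) (h b a)

lemma ordConnected_of_preconnected_hasse_induce [LinearOrder α] {s : Set α}
    (hs : ((hasse α).induce s).Preconnected) : s.OrdConnected := by
  refine ⟨fun x hx y hy c ⟨hxc, hcy⟩ ↦ ?_⟩
  by_contra hc
  -- a walk from `x` to `y` would have to jump over `c` along a covering relation
  obtain ⟨w⟩ := hs ⟨x, hx⟩ ⟨y, hy⟩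
  obtain ⟨d, -, hd₁, hd₂⟩ := w.exists_boundary_dart {v | v.1 < c}
    (hxc.lt_of_ne (ne_of_mem_of_not_mem hx hc)) (not_lt.2 hcy)
  have hd₂' : c < d.snd.1 := (not_lt.1 hd₂).lt_of_ne (ne_of_mem_of_not_mem d.snd.2 hc).symm
  rcases d.adj with h | h
  · exact h.2 hd₁ hd₂'
  · exact (hd₁.trans hd₂').not_gt h.1

lemma hasse_induce_connected_iff [LinearOrder α] [SuccOrder α] [IsSuccArchimedean α]
    {s : Set α} : ((hasse α).induce s).Connected ↔ s.Nonempty ∧ s.OrdConnected := by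
  refine ⟨fun h ↦ ⟨h.nonempty.elim fun v ↦ ⟨v, v.2⟩,
    ordConnected_of_preconnected_hasse_induce h.preconnected⟩, fun ⟨hne, _⟩ ↦ ?_⟩
  have := hne.to_subtype
  rw [hasse_induce_eq_hasse]
  exact ⟨hasse_preconnected_of_succ s⟩

end SimpleGraph

section

variable {α β : Type*}

lemma Nat.card_subtype_eq_card_and_add_card_and_not [Finite α] (p q : α → Prop) :
    Nat.card {a // p a} = Nat.card {a // p a ∧ q a} + Nat.card {a // p a ∧ ¬ q a} := by
  classical
  rw [← Nat.card_sum, Nat.card_congr ((Equiv.sumCompl fun a : {a // p a} ↦ q a).symm.trans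
    (Equiv.sumCongr (Equiv.subtypeSubtypeEquivSubtypeInter p q)
      (Equiv.subtypeSubtypeEquivSubtypeInter p fun a ↦ ¬ q a)))]

lemma Set.natCard_ne_univ [Finite α] : Nat.card {s : Set α // s ≠ univ} = 2 ^ Nat.card α - 1 := by
  have := Fintype.ofFinite α
  classical
  rw [Nat.card_eq_fintype_card, Fintype.card_subtype_compl, Fintype.card_subtype_eq,
    Fintype.card_set, Nat.card_eq_fintype_card]

lemma Set.natCard_nonempty_ordConnected [LinearOrder α] [Finite α] :
    Nat.card {s : Set α // s.Nonempty ∧ s.OrdConnected} = (Nat.card α + 1).choose 2 := by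
  rw [← Sym2.natCard, ← Nat.card_congr Sym2.sortEquiv.symm]
  symm
  refine Nat.card_congr (Equiv.ofBijective (fun p ↦ ⟨Icc p.1.1 p.1.2, nonempty_Icc.2 p.2,
    ordConnected_Icc⟩) ⟨fun p q hpq ↦ ?_, fun ⟨s, hne, hs⟩ ↦ ?_⟩)
  · have := (Icc_eq_Icc_iff p.2).1 (congrArg Subtype.val hpq)
    exact Subtype.ext (Prod.ext this.1 this.2)
  · obtain ⟨a, has, ha⟩ := s.exists_min_image id s.toFinite hne
    obtain ⟨b, hbs, hb⟩ := s.exists_max_image id s.toFinite hne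
    refine ⟨⟨(a, b), ha b hbs⟩, Subtype.ext ?_⟩
    exact (hs.out has hbs).antisymm fun x hx ↦ ⟨ha x hx, hb x hx⟩

lemma Set.insert_inl_image_preimage_inr [Unique α] {s : Set (α ⊕ β)} (h : inl default ∈ s) :
    insert (inl default) (inr '' (inr ⁻¹' s)) = s := by
  ext (a | b)
  · simp [Unique.eq_default a, h]
  · simp

lemma Set.image_inr_preimage_inr [Unique α] {s : Set (α ⊕ β)} (h : inl default ∉ s) :
    inr '' (inr ⁻¹' s) = s := by
  ext (a | b)
  · simp [Unique.eq_default a, h]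
  · simp

lemma Set.insert_inl_image_inr_eq_univ [Unique α] {t : Set β} :
    insert (inl (default : α)) (inr '' t) = univ ↔ t = univ := by
  simp [eq_univ_iff_forall, Unique.forall_iff]

lemma SimpleGraph.natCard_connected_induce_pathGraph (n : ℕ) :
    Nat.card {t : Set (Fin n) // ((pathGraph n).induce t).Connected} = n * (n + 1) / 2 := by
  simp_rw [pathGraph, hasse_induce_connected_iff]
  rw [natCard_nonempty_ordConnected, Nat.card_fin, Nat.choose_two_right, Nat.add_sub_cancel,
    mul_comm]

end

namespace fanGraph

variable {m n : ℕ}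

lemma adj_inl_inr (a : Fin m) (j : Fin n) : (fanGraph m n).Adj (inl a) (inr j) :=
  ⟨by simp, Or.inl trivial⟩

lemma adj_inr_inr {i j : Fin n} : (fanGraph m n).Adj (inr i) (inr j) ↔ (pathGraph n).Adj i j := by
  simp only [fanGraph, fromRel_adj, ne_eq, inr.injEq, Fin.ext_iff, pathGraph_adj,
    and_iff_right_iff_imp]
  omega

def pathEmbedding (m n : ℕ) : pathGraph n ↪g fanGraph m n where
  toEmbedding := .inr
  map_rel_iff' := adj_inr_inr

@[simp]
lemma coe_pathEmbedding : ⇑(pathEmbedding m n) = inr := rfl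

lemma isTube_image_inr_iff [NeZero m] {t : Set (Fin n)} :
    IsTube (fanGraph m n) (inr '' t) ↔ ((pathGraph n).induce t).Connected := by
  have hconn := ((pathEmbedding m n).induceImageIso t).connected_iff
  rw [coe_pathEmbedding] at hconn
  refine ⟨fun h ↦ hconn.2 h.2.2, fun h ↦ ⟨?_, ?_, hconn.1 h⟩⟩
  · obtain ⟨⟨j, hj⟩⟩ := h.nonempty
    exact ⟨inr j, mem_image_of_mem _ hj⟩
  · exact ne_univ_iff_exists_notMem _ |>.2 ⟨inl 0, by simp⟩

lemma isTube_insert_inl_image_inr_iff {t : Set (Fin n)} :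
    IsTube (fanGraph 1 n) (insert (inl 0) (inr '' t)) ↔ t ≠ univ := by
  refine ⟨fun h ↦ insert_inl_image_inr_eq_univ.not.1 h.2.1, fun ht ↦ ⟨insert_nonempty _ _,
    insert_inl_image_inr_eq_univ.not.2 ht, induce_connected_of_forall_adj (mem_insert _ _) ?_⟩⟩
  rintro (a | j) - hj
  · exact absurd (congrArg inl (Subsingleton.elim a 0)) hj
  · exact adj_inl_inr 0 j

def tubesContainingApexEquiv (n : ℕ) :
    {s : Set (Fin 1 ⊕ Fin n) // IsTube (fanGraph 1 n) s ∧ inl 0 ∈ s} ≃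
      {t : Set (Fin n) // t ≠ univ} where
  toFun s := ⟨inr ⁻¹' s.1, by
    rw [← isTube_insert_inl_image_inr_iff]
    convert s.2.1
    exact insert_inl_image_preimage_inr s.2.2⟩
  invFun t := ⟨insert (inl 0) (inr '' t.1), isTube_insert_inl_image_inr_iff.2 t.2, mem_insert _ _⟩
  left_inv s := Subtype.ext (insert_inl_image_preimage_inr s.2.2)
  right_inv t := Subtype.ext <| ext fun j ↦ by simp

def tubesAvoidingApexEquiv (n : ℕ) :
    {s : Set (Fin 1 ⊕ Fin n) // IsTube (fanGraph 1 n) s ∧ inl 0 ∉ s} ≃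
      {t : Set (Fin n) // ((pathGraph n).induce t).Connected} where
  toFun s := ⟨inr ⁻¹' s.1, by
    rw [← isTube_image_inr_iff (m := 1), image_inr_preimage_inr s.2.2]; exact s.2.1⟩
  invFun t := ⟨inr '' t.1, isTube_image_inr_iff.2 t.2, by simp⟩
  left_inv s := Subtype.ext (image_inr_preimage_inr s.2.2)
  right_inv t := Subtype.ext (preimage_image_eq _ inr_injective)

end fanGraph

/-- The number of tubes of `F_{1,n}` (the graph underlying the pterahedron) is
`n(n+1)/2 + 2^n − 1`. -/
theorem card_tubes_fanGraph_one (n : ℕ) :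
    Nat.card {s : Set (Fin 1 ⊕ Fin n) // IsTube (fanGraph 1 n) s} =
      n * (n + 1) / 2 + 2 ^ n - 1 := by
  rw [Nat.card_subtype_eq_card_and_add_card_and_not _ (inl 0 ∈ ·),
    Nat.card_congr (fanGraph.tubesContainingApexEquiv n),
    Nat.card_congr (fanGraph.tubesAvoidingApexEquiv n),
    natCard_ne_univ, Nat.card_fin, natCard_connected_induce_pathGraph]
  have := Nat.one_le_two_pow (n := n)
  omega
end

section
/- The shuffle-indexed product * on maximal tubings of star graphs (Definition: T * V = ∑_{σ ∈ Sh(n−r, m−s)} T *_σ V, extended linearly) makes the graded vector space spanned by all maximal tubings of the star graphs St_n, n ≥ 1, into an associative algebra. -/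
open Finsupp

/-- All shuffles (interleavings) of two lists. -/
def listShuffles : List ℕ → List ℕ → List (List ℕ)
  | [], ys => [ys]
  | x :: xs, [] => [x :: xs]
  | x :: xs, y :: ys =>
      (listShuffles xs (y :: ys)).map (x :: ·) ++ (listShuffles (x :: xs) ys).map (y :: ·)
  termination_by xs ys => xs.length + ys.length

/-- The code `(n, S, w)` of a maximal tubing `Tub_r(u₁,…,u_n)` of the star graph
`St_n`: `S = {u₁,…,u_r} ⊆ [n]` is the set of singleton tubes and
`w = (u_{r+1},…,u_n)` is the induced ordering of the complement `[n] ∖ S`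
(`Tub_n` corresponds to `S = [n]`, `w = []`). -/
def IsMTCode (p : ℕ × Finset ℕ × List ℕ) : Prop :=
  1 ≤ p.1 ∧ p.2.1 ⊆ Finset.Icc 1 p.1 ∧ p.2.2.Nodup ∧
    ∀ x, x ∈ p.2.2 ↔ x ∈ Finset.Icc 1 p.1 ∧ x ∉ p.2.1

/-- Basis: the maximal tubings of the star graphs `St_n`, `n ≥ 1`, i.e. the vertices
of the stellohedra. -/
def MTB : Type := {p : ℕ × Finset ℕ × List ℕ // IsMTCode p}

open Classical in
noncomputable def mkMT (p : ℕ × Finset ℕ × List ℕ) : MTB →₀ ℚ :=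
  if h : IsMTCode p then Finsupp.single ⟨p, h⟩ 1 else 0

/-- The product of two basis elements: `T * V = ∑_{σ ∈ Sh(n−r,m−s)} T *_σ V`, i.e.
the singleton-tube sets are combined (with the second shifted by `n`) and the sum runs
over all shuffles of the two orderings of the non-singleton nodes. -/
noncomputable def mulB (a b : MTB) : MTB →₀ ℚ :=
  ((listShuffles a.1.2.2 (b.1.2.2.map (· + a.1.1))).map fun w =>
      mkMT (a.1.1 + b.1.1, a.1.2.1 ∪ b.1.2.1.image (· + a.1.1), w)).sum

/-- The shuffle-indexed product `*` on the graded vector space spanned by all maximal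
tubings of the star graphs, extended bilinearly. -/
noncomputable def stelloMul (f g : MTB →₀ ℚ) : MTB →₀ ℚ :=
  f.sum fun a ca => g.sum fun b cb => (ca * cb) • mulB a b

/-!
Both products are bilinear, so it is enough to compare them on three basis tubings
`T, V, W` of `St_n, St_m, St_k`. Each bracketing of `T * V * W` has singleton set
`S_T ∪ (S_V + n) ∪ (S_W + n + m)` and sums over the shuffles of the orderings `w_T`,
`w_V + n`, `w_W + n + m` of the remaining nodes, taken two at a time; associativity of shuffles,
`Sh(n+m,r)·(Sh(n,m)×1_r) = Sh(n,m,r) = Sh(n,m+r)·(1_n×Sh(m,r))`, identifies the two sums.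
Intermediate codes produced by a shuffle are valid, so the second product may be taken on them.
-/

lemma listShuffles_nil_left (y : List ℕ) : listShuffles [] y = [y] := by
  rw [listShuffles]

lemma listShuffles_nil_right (x : List ℕ) : listShuffles x [] = [x] := by
  cases x <;> rw [listShuffles]

lemma listShuffles_cons_cons (a b : ℕ) (x y : List ℕ) :
    listShuffles (a :: x) (b :: y) =
      (listShuffles x (b :: y)).map (a :: ·) ++ (listShuffles (a :: x) y).map (b :: ·) := by
  rw [listShuffles]

lemma listShuffles_map (f : ℕ → ℕ) (x y : List ℕ) :
    listShuffles (x.map f) (y.map f) = (listShuffles x y).map (List.map f) := by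
  match x, y with
  | [], y => simp [listShuffles_nil_left]
  | a :: x, [] => simp [listShuffles_nil_right]
  | a :: x, b :: y =>
    have ihl := listShuffles_map f x (b :: y)
    have ihr := listShuffles_map f (a :: x) y
    simp only [List.map_cons] at ihl ihr ⊢
    simp [listShuffles_cons_cons, ihl, ihr, Function.comp_def]
  termination_by x.length + y.length

lemma perm_append_of_mem_listShuffles : ∀ {x y w : List ℕ}, w ∈ listShuffles x y → w.Perm (x ++ y)
  | [], y, w, hw => by simp_all [listShuffles_nil_left]
  | a :: x, [], w, hw => by simp_all [listShuffles_nil_right]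
  | a :: x, b :: y, w, hw => by
    rw [listShuffles_cons_cons] at hw
    rcases List.mem_append.1 hw with h | h <;> obtain ⟨w', hw', rfl⟩ := List.mem_map.1 h
    · exact (perm_append_of_mem_listShuffles hw').cons a
    · exact ((perm_append_of_mem_listShuffles hw').cons b).trans List.perm_middle.symm
  termination_by x y => x.length + y.length

section ShuffleSum

variable {M : Type*} [AddCommMonoid M]

def shuffleSum (F : List ℕ → M) (x y : List ℕ) : M := ((listShuffles x y).map F).sum

lemma shuffleSum_nil_left (F : List ℕ → M) (y : List ℕ) : shuffleSum F [] y = F y := by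
  simp [shuffleSum, listShuffles_nil_left]

lemma shuffleSum_nil_right (F : List ℕ → M) (x : List ℕ) : shuffleSum F x [] = F x := by
  simp [shuffleSum, listShuffles_nil_right]

lemma shuffleSum_cons_cons (F : List ℕ → M) (a b : ℕ) (x y : List ℕ) :
    shuffleSum F (a :: x) (b :: y) =
      shuffleSum (fun w => F (a :: w)) x (b :: y) + shuffleSum (fun w => F (b :: w)) (a :: x) y := by
  simp [shuffleSum, listShuffles_cons_cons, Function.comp_def]

lemma shuffleSum_add (F G : List ℕ → M) (x y : List ℕ) :
    shuffleSum (fun w => F w + G w) x y = shuffleSum F x y + shuffleSum G x y := by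
  simp [shuffleSum, List.sum_map_add]

lemma shuffleSum_congr {F G : List ℕ → M} {x y : List ℕ}
    (h : ∀ w ∈ listShuffles x y, F w = G w) : shuffleSum F x y = shuffleSum G x y := by
  rw [shuffleSum, shuffleSum, List.map_congr_left h]

lemma shuffleSum_map (F : List ℕ → M) (f : ℕ → ℕ) (x y : List ℕ) :
    shuffleSum F (x.map f) (y.map f) = shuffleSum (fun w => F (w.map f)) x y := by
  simp [shuffleSum, listShuffles_map, Function.comp_def]

lemma map_shuffleSum {N G : Type*} [AddCommMonoid N] [FunLike G M N] [AddMonoidHomClass G M N]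
    (φ : G) (F : List ℕ → M) (x y : List ℕ) :
    φ (shuffleSum F x y) = shuffleSum (fun w => φ (F w)) x y := by
  simp [shuffleSum, map_list_sum, Function.comp_def]

/-- Both sides split on which of the three lists supplies the first letter. -/
theorem shuffleSum_assoc (F : List ℕ → M) (x y z : List ℕ) :
    shuffleSum (fun w => shuffleSum F w z) x y = shuffleSum (fun v => shuffleSum F x v) y z := by
  match x, y, z with
  | [], y, z => simp only [shuffleSum_nil_left]
  | x, [], z => simp only [shuffleSum_nil_left, shuffleSum_nil_right]
  | x, y, [] => simp only [shuffleSum_nil_right]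
  | a :: x, b :: y, c :: z =>
    have iha := shuffleSum_assoc (fun u => F (a :: u)) x (b :: y) (c :: z)
    have ihb := shuffleSum_assoc (fun u => F (b :: u)) (a :: x) y (c :: z)
    have ihc := shuffleSum_assoc (fun u => F (c :: u)) (a :: x) (b :: y) z
    simp only [shuffleSum_cons_cons, shuffleSum_add]
    rw [iha, ihb, ← ihc, shuffleSum_cons_cons (fun v => shuffleSum (fun u => F (a :: u)) x v),
      shuffleSum_cons_cons (fun w => shuffleSum (fun u => F (c :: u)) w z)]
    abel
  termination_by x.length + y.length + z.length

end ShuffleSum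

lemma nodup_append_map_add {x y : List ℕ} {n : ℕ} (hx : x.Nodup) (hy : y.Nodup)
    (hxn : ∀ t ∈ x, t ≤ n) (hy1 : ∀ t ∈ y, 1 ≤ t) : (x ++ y.map (· + n)).Nodup := by
  refine List.nodup_append.2 ⟨hx, hy.map fun s t hst => by omega, ?_⟩
  intro t ht u hu
  obtain ⟨s, hs, rfl⟩ := List.mem_map.1 hu
  have := hxn t ht; have := hy1 s hs; omega

lemma IsMTCode.shuffle {n m : ℕ} {Sa Sb : Finset ℕ} {xa xb w : List ℕ}
    (ha : IsMTCode (n, Sa, xa)) (hb : IsMTCode (m, Sb, xb))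
    (hw : w ∈ listShuffles xa (xb.map (· + n))) :
    IsMTCode (n + m, Sa ∪ Sb.image (· + n), w) := by
  obtain ⟨hn, hSa, hxa, hmema⟩ := ha
  obtain ⟨hm, hSb, hxb, hmemb⟩ := hb
  have hperm := perm_append_of_mem_listShuffles hw
  simp only [IsMTCode, Finset.subset_iff, Finset.mem_Icc] at *
  refine ⟨by omega, ?_, hperm.nodup_iff.2 (nodup_append_map_add hxa hxb
    (fun t ht => ((hmema t).1 ht).1.2) (fun t ht => ((hmemb t).1 ht).1.1)), fun t => ?_⟩
  · simp only [Finset.mem_union, Finset.mem_image]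
    rintro t (ht | ⟨s, hs, rfl⟩)
    · have := hSa ht; omega
    · have := hSb hs; omega
  · rw [hperm.mem_iff]
    simp only [List.mem_append, List.mem_map, Finset.mem_union, Finset.mem_image, hmema, hmemb]
    rcases le_or_gt t n with htn | hnt
    · have hSb' : ∀ a ∈ Sb, a + n ≠ t := fun a ha => by have := hSb ha; omega
      grind
    · obtain ⟨s, rfl⟩ : ∃ s, t = s + n := ⟨t - n, by omega⟩
      simp only [add_left_inj, exists_eq_right]
      grind

noncomputable def stelloMulₗ : (MTB →₀ ℚ) →ₗ[ℚ] (MTB →₀ ℚ) →ₗ[ℚ] MTB →₀ ℚ :=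
  linearCombination ℚ fun a => linearCombination ℚ (mulB a)

lemma stelloMul_eq_stelloMulₗ (f g : MTB →₀ ℚ) : stelloMul f g = stelloMulₗ f g := by
  simp only [stelloMul, stelloMulₗ, linearCombination_apply, LinearMap.finsupp_sum_apply,
    LinearMap.smul_apply, Finsupp.smul_sum, mul_smul]

lemma stelloMulₗ_single_single (a b : MTB) : stelloMulₗ (single a 1) (single b 1) = mulB a b := by
  simp [stelloMulₗ]

lemma Finsupp.bilinear_assoc_of_single {R α : Type*} [CommSemiring R]
    (B : (α →₀ R) →ₗ[R] (α →₀ R) →ₗ[R] α →₀ R)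
    (h : ∀ a b c, B (B (single a 1) (single b 1)) (single c 1) =
      B (single a 1) (B (single b 1) (single c 1)))
    (f g k : α →₀ R) : B (B f g) k = B f (B g k) := by
  suffices B.compr₂ B = (LinearMap.llcomp R _ _ _ ∘ₗ B).compl₂ B from
    LinearMap.congr_fun (LinearMap.congr_fun (LinearMap.congr_fun this f) g) k
  exact lhom_ext' fun a => LinearMap.ext_ring <| lhom_ext' fun b => LinearMap.ext_ring <|
    lhom_ext' fun c => LinearMap.ext_ring (h a b c)

/-- `mulB` read on codes, so that it can be applied before validity of the codes is known. -/
noncomputable def codeMul (p q : ℕ × Finset ℕ × List ℕ) : MTB →₀ ℚ :=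
  shuffleSum (fun w => mkMT (p.1 + q.1, p.2.1 ∪ q.2.1.image (· + p.1), w))
    p.2.2 (q.2.2.map (· + p.1))

lemma mulB_eq_codeMul (a b : MTB) : mulB a b = codeMul a.1 b.1 := rfl

lemma stelloMulₗ_mkMT_single {p : ℕ × Finset ℕ × List ℕ} (hp : IsMTCode p) (c : MTB) :
    stelloMulₗ (mkMT p) (single c 1) = codeMul p c.1 := by
  rw [mkMT, dif_pos hp]
  exact stelloMulₗ_single_single ⟨p, hp⟩ c

lemma stelloMulₗ_single_mkMT {p : ℕ × Finset ℕ × List ℕ} (hp : IsMTCode p) (a : MTB) :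
    stelloMulₗ (single a 1) (mkMT p) = codeMul a.1 p := by
  rw [mkMT, dif_pos hp]
  exact stelloMulₗ_single_single a ⟨p, hp⟩

lemma shuffleSum_codeMul_assoc (n m k : ℕ) (Sa Sb Sc : Finset ℕ) (xa xb xc : List ℕ) :
    shuffleSum (fun w => codeMul (n + m, Sa ∪ Sb.image (· + n), w) (k, Sc, xc))
        xa (xb.map (· + n)) =
      shuffleSum (fun v => codeMul (n, Sa, xa) (m + k, Sb ∪ Sc.image (· + m), v))
        xb (xc.map (· + m)) := by
  have hshift : ((· + n) ∘ (· + m) : ℕ → ℕ) = (· + (n + m)) := by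
    funext t; simp only [Function.comp_apply]; omega
  have hsets : Sa ∪ Sb.image (· + n) ∪ Sc.image (· + (n + m)) =
      Sa ∪ (Sb ∪ Sc.image (· + m)).image (· + n) := by
    rw [Finset.image_union, Finset.image_image, hshift, Finset.union_assoc]
  simp only [codeMul]
  rw [← add_assoc, hsets, shuffleSum_assoc, ← hshift, ← List.map_map, shuffleSum_map]

lemma mulB_assoc (a b c : MTB) :
    stelloMulₗ (mulB a b) (single c 1) = stelloMulₗ (single a 1) (mulB b c) := by
  rw [mulB_eq_codeMul, mulB_eq_codeMul, codeMul, codeMul,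
    ← LinearMap.flip_apply (n := single c 1), map_shuffleSum, map_shuffleSum]
  simp only [LinearMap.flip_apply]
  rw [shuffleSum_congr fun w hw => stelloMulₗ_mkMT_single (a.2.shuffle b.2 hw) _,
    shuffleSum_congr fun v hv => stelloMulₗ_single_mkMT (b.2.shuffle c.2 hv) _]
  exact shuffleSum_codeMul_assoc ..

/-- The product `*` makes the graded vector space spanned by the maximal tubings of
the star graphs `St_n`, `n ≥ 1`, into an associative algebra. -/
theorem stelloMul_assoc (f g h : MTB →₀ ℚ) :
    stelloMul (stelloMul f g) h = stelloMul f (stelloMul g h) := by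
  simp only [stelloMul_eq_stelloMulₗ]
  refine Finsupp.bilinear_assoc_of_single stelloMulₗ (fun a b c => ?_) f g h
  rw [stelloMulₗ_single_single, stelloMulₗ_single_single, mulB_assoc]
end

section
/- Every maximal tubing T of St_n other than {{1},...,{n}} admits a unique normal form Tub_r(u₁,...,u_n): there is a unique 0 ≤ r ≤ n, unique 1 ≤ u₁ < ⋯ < u_r ≤ n, and a unique ordering (u_{r+1},...,u_n) of [n]∖{u₁,...,u_r} such that T = { {u₁},...,{u_r}, t₀, t₀∪{u_{r+1}}, ..., t₀∪{u_{r+1},...,u_{n−1}} } where t₀ = {0,u₁,...,u_r}. -/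
open Finset

/-- The star graph `St_n`: center `0` adjacent to each of the outer nodes `1,…,n`,
and no other edges. -/
def St (n : ℕ) : SimpleGraph (Fin (n + 1)) :=
  SimpleGraph.fromRel fun i _ => i = 0

/-- A tube: a nonempty proper subset of vertices inducing a connected subgraph. -/
def IsTubeF {V : Type*} [Fintype V] (G : SimpleGraph V) (s : Finset V) : Prop :=
  s.Nonempty ∧ s ≠ Finset.univ ∧ (G.induce (↑s : Set V)).Connected

/-- A tubing: a set of pairwise compatible tubes (pairwise nested or far apart). -/
def IsTubingF {V : Type*} [Fintype V] [DecidableEq V] (G : SimpleGraph V) (T : Finset (Finset V)) : Prop :=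
  (∀ s ∈ T, IsTubeF G s) ∧
    ∀ s ∈ T, ∀ u ∈ T, s ⊆ u ∨ u ⊆ s ∨ ¬(G.induce (↑(s ∪ u) : Set V)).Connected

/-- The tubing `Tub_r(u₁,…,u_n)` of `St_n`: the singleton tubes `{u₁},…,{u_r}`
together with the chain `t₀ ⊂ t₀∪{u_{r+1}} ⊂ ⋯ ⊂ t₀∪{u_{r+1},…,u_{n−1}}`, where
`t₀ = {0,u₁,…,u_r}` and `u` is the list `(u₁,…,u_n)`. -/
def tubOf (n r : ℕ) (u : List (Fin (n + 1))) : Finset (Finset (Fin (n + 1))) :=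
  ((u.take r).map fun x => ({x} : Finset (Fin (n + 1)))).toFinset ∪
    (Finset.range (n - r)).image fun j =>
      insert (0 : Fin (n + 1)) ((u.take r).toFinset ∪ ((u.drop r).take j).toFinset)

/-!
In a tubing of the star every tube either contains the center `0` or is a singleton `{x}` with
`x ≠ 0`; tubes containing `0` are pairwise nested and contain every such `x`. So a tubing is a
set `S` of singletons together with a chain of tubes above `t₀ = {0} ∪ S`. Maximality forces
`t₀` into `T` and saturates the chain: if `d` is the successor of a member `c` in the chain
completed by the whole vertex set, then `c ∪ {y}` for `y ∈ d \ c` is nested with every tube of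
`T`, hence lies in `T`. The chain thus has exactly one member of each size `r + 1, …, n`, and
the order in which the outer nodes enter it is `(u_{r+1}, …, u_n)`. Uniqueness holds because
members of a chain are determined by their size.
-/

namespace List

variable {α : Type*} [DecidableEq α]

theorem eq_of_toFinset_take_eq {l₁ l₂ : List α} (h₁ : l₁.Nodup) (h₂ : l₂.Nodup)
    (h : ∀ k, (l₁.take k).toFinset = (l₂.take k).toFinset) : l₁ = l₂ := by
  induction l₁ generalizing l₂ with
  | nil =>
    cases l₂ with
    | nil => rfl
    | cons b t₂ => simpa using (h 1).symm
  | cons a t₁ ih =>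
    cases l₂ with
    | nil => simpa using h 1
    | cons b t₂ =>
      have hab : a = b := by simpa using h 1
      subst hab
      refine congrArg _ (ih h₁.of_cons h₂.of_cons fun k => ?_)
      have hk := h (k + 1)
      simp only [take_succ_cons, toFinset_cons] at hk
      have ha₁ : a ∉ (t₁.take k).toFinset := fun ha =>
        (nodup_cons.mp h₁).1 (mem_of_mem_take (mem_toFinset.mp ha))
      have ha₂ : a ∉ (t₂.take k).toFinset := fun ha =>
        (nodup_cons.mp h₂).1 (mem_of_mem_take (mem_toFinset.mp ha))
      rw [← Finset.erase_insert ha₁, hk, Finset.erase_insert ha₂]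

theorem exists_isPrefix_forall_toFinset_take {P : Finset α → Prop} {N : ℕ}
    (hP : ∀ s, P s → s.card < N → ∃ y ∉ s, P (insert y s))
    {l₀ : List α} (hl₀ : l₀.Nodup) (hPl₀ : P l₀.toFinset) (hlen : l₀.length ≤ N) :
    ∃ l, l₀ <+: l ∧ l.Nodup ∧ l.length = N ∧
      ∀ k, l₀.length ≤ k → k ≤ N → P (l.take k).toFinset := by
  suffices ∀ M, l₀.length ≤ M → M ≤ N → ∃ l, l₀ <+: l ∧ l.Nodup ∧ l.length = M ∧
      ∀ k, l₀.length ≤ k → k ≤ M → P (l.take k).toFinset from this N hlen le_rfl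
  intro M hM
  induction M, hM using Nat.le_induction with
  | base =>
    refine fun _ => ⟨l₀, prefix_refl _, hl₀, rfl, fun k h₁ h₂ => ?_⟩
    rwa [le_antisymm h₂ h₁, take_length]
  | succ M hM ih =>
    intro hMN
    obtain ⟨l, hpre, hnd, hlen, hl⟩ := ih (by omega)
    have hPl : P l.toFinset := by simpa [← hlen] using hl M hM le_rfl
    obtain ⟨y, hy, hPy⟩ := hP _ hPl (by rw [toFinset_card_of_nodup hnd]; omega)
    refine ⟨l ++ [y], hpre.trans (prefix_append _ _), ?_, by simp [hlen], fun k h₁ h₂ => ?_⟩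
    · exact hnd.append (nodup_singleton y) (by simpa using hy)
    · rcases h₂.lt_or_eq with h₂ | rfl
      · rw [take_append_of_le_length (by omega)]
        exact hl k h₁ (by omega)
      · rw [take_of_length_le (by simp [hlen])]
        rwa [toFinset_append, toFinset_cons, toFinset_nil, Finset.union_insert, Finset.union_empty]

end List

section Maximal

variable {V : Type*} [Fintype V] [DecidableEq V] {G : SimpleGraph V} {T : Finset (Finset V)}

theorem mem_of_isTubeF_of_compatible (hT : IsTubingF G T)
    (hmax : ∀ U, IsTubingF G U → T ⊆ U → U = T) {s : Finset V} (hs : IsTubeF G s)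
    (hc : ∀ u ∈ T, s ⊆ u ∨ u ⊆ s ∨ ¬(G.induce (↑(s ∪ u) : Set V)).Connected) : s ∈ T := by
  have hU : IsTubingF G (insert s T) := by
    refine ⟨fun t ht => ?_, fun a ha b hb => ?_⟩
    · rcases mem_insert.mp ht with rfl | ht
      exacts [hs, hT.1 t ht]
    rcases mem_insert.mp ha with ha | ha <;> rcases mem_insert.mp hb with hb | hb
    · exact Or.inl (by rw [ha, hb])
    · exact ha ▸ hc b hb
    · rw [hb]
      rcases hc a ha with h | h | h
      · exact Or.inr (Or.inl h)
      · exact Or.inl h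
      · exact Or.inr (Or.inr (by rwa [union_comm]))
    · exact hT.2 a ha b hb
  rw [← hmax _ hU (subset_insert s T)]
  exact mem_insert_self s T

end Maximal

open SimpleGraph

namespace St

variable {n : ℕ}

theorem adj_iff {a b : Fin (n + 1)} : (St n).Adj a b ↔ a ≠ b ∧ (a = 0 ∨ b = 0) := by
  simp [St, fromRel_adj]

theorem induce_connected_iff {s : Finset (Fin (n + 1))} :
    ((St n).induce (s : Set (Fin (n + 1)))).Connected ↔ 0 ∈ s ∨ ∃ x, s = {x} := by
  rw [connected_iff_exists_forall_reachable]
  constructor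
  · rintro ⟨a, ha⟩
    by_contra! h
    have hbot : (St n).induce (s : Set (Fin (n + 1))) = ⊥ := by
      ext v w
      simp only [comap_adj, Function.Embedding.coe_subtype, bot_adj, iff_false, adj_iff]
      rintro ⟨-, hv | hw⟩
      · exact h.1 (hv ▸ v.2)
      · exact h.1 (hw ▸ w.2)
    obtain ⟨b, hb, hba⟩ : ∃ b ∈ s, b ≠ a := by
      by_contra! hb
      exact h.2 a (Finset.eq_singleton_iff_unique_mem.mpr ⟨a.2, hb⟩)
    have := ha ⟨b, hb⟩
    rw [hbot, reachable_bot] at this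
    exact hba (congrArg Subtype.val this).symm
  · rintro (h0 | ⟨x, rfl⟩)
    · refine ⟨⟨0, h0⟩, fun w => ?_⟩
      by_cases hw : (w : Fin (n + 1)) = 0
      · rw [show w = ⟨0, h0⟩ from Subtype.ext hw]
      · exact Adj.reachable (adj_iff.mpr ⟨Ne.symm hw, Or.inl rfl⟩)
    · refine ⟨⟨x, by simp⟩, fun w => ?_⟩
      rw [show w = ⟨x, by simp⟩ from Subtype.ext (by simpa using w.2)]

theorem isTubeF_iff {s : Finset (Fin (n + 1))} :
    IsTubeF (St n) s ↔ s ≠ Finset.univ ∧ (0 ∈ s ∨ ∃ x, s = {x}) := by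
  rw [IsTubeF, induce_connected_iff]
  constructor
  · exact fun h => h.2
  · rintro ⟨hs, h0 | ⟨x, rfl⟩⟩
    · exact ⟨⟨0, h0⟩, hs, Or.inl h0⟩
    · exact ⟨Finset.singleton_nonempty x, hs, Or.inr ⟨x, rfl⟩⟩

variable {T : Finset (Finset (Fin (n + 1)))}

theorem zero_mem_or_eq_singleton (hT : IsTubingF (St n) T) {s : Finset (Fin (n + 1))}
    (hs : s ∈ T) : 0 ∈ s ∨ ∃ x ≠ 0, s = {x} := by
  rcases (isTubeF_iff.mp (hT.1 s hs)).2 with h0 | ⟨x, rfl⟩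
  · exact Or.inl h0
  · by_cases hx : x = 0
    · exact Or.inl (by simp [hx])
    · exact Or.inr ⟨x, hx, rfl⟩

theorem subset_or_subset_of_zero_mem (hT : IsTubingF (St n) T) {c d : Finset (Fin (n + 1))}
    (hc : c ∈ T) (hd : d ∈ T) (h0 : 0 ∈ c) : c ⊆ d ∨ d ⊆ c := by
  have hconn := induce_connected_iff.mpr (Or.inl (mem_union_left d h0))
  rcases hT.2 c hc d hd with h | h | h
  exacts [Or.inl h, Or.inr h, absurd hconn h]

theorem eq_of_zero_mem_of_card_eq (hT : IsTubingF (St n) T) {c d : Finset (Fin (n + 1))}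
    (hc : c ∈ T) (hd : d ∈ T) (h0 : 0 ∈ c) (hcard : c.card = d.card) : c = d := by
  rcases subset_or_subset_of_zero_mem hT hc hd h0 with h | h
  exacts [eq_of_subset_of_card_le h hcard.ge, (eq_of_subset_of_card_le h hcard.le).symm]

theorem mem_of_singleton_mem (hT : IsTubingF (St n) T) {x : Fin (n + 1)} {c : Finset (Fin (n + 1))}
    (hx : {x} ∈ T) (hx0 : x ≠ 0) (hc : c ∈ T) (h0 : 0 ∈ c) : x ∈ c := by
  rcases subset_or_subset_of_zero_mem hT hc hx h0 with h | h
  · exact absurd (mem_singleton.mp (h h0)).symm hx0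
  · exact h (mem_singleton_self x)

/-- The set `{u₁, …, u_r}` of the normal form of `T`. -/
def singletonNodes (T : Finset (Finset (Fin (n + 1)))) : Finset (Fin (n + 1)) :=
  univ.filter fun x => x ≠ 0 ∧ {x} ∈ T

@[simp]
theorem mem_singletonNodes {x : Fin (n + 1)} : x ∈ singletonNodes T ↔ x ≠ 0 ∧ {x} ∈ T := by
  simp [singletonNodes]

theorem zero_notMem_singletonNodes : (0 : Fin (n + 1)) ∉ singletonNodes T := by simp

theorem insert_zero_singletonNodes_subset (hT : IsTubingF (St n) T) {c : Finset (Fin (n + 1))}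
    (hc : c ∈ T) (h0 : 0 ∈ c) : insert 0 (singletonNodes T) ⊆ c :=
  insert_subset h0 fun _ hx =>
    mem_of_singleton_mem hT (mem_singletonNodes.mp hx).2 (mem_singletonNodes.mp hx).1 hc h0

theorem exists_zero_mem (hT : IsTubingF (St n) T)
    (hmax : ∀ U, IsTubingF (St n) U → T ⊆ U → U = T)
    (hne : T ≠ (univ.filter fun x => x ≠ (0 : Fin (n + 1))).image
      fun x => ({x} : Finset (Fin (n + 1)))) :
    ∃ c ∈ T, 0 ∈ c := by
  by_contra! h
  refine hne (ext fun s => ⟨fun hs => ?_, fun hs => ?_⟩)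
  · obtain ⟨x, hx0, rfl⟩ := (zero_mem_or_eq_singleton hT hs).resolve_left (h s hs)
    exact mem_image_of_mem _ (mem_filter.mpr ⟨mem_univ x, hx0⟩)
  · obtain ⟨x, hx, rfl⟩ := mem_image.mp hs
    have hx0 : x ≠ 0 := (mem_filter.mp hx).2
    refine mem_of_isTubeF_of_compatible hT hmax
      (isTubeF_iff.mpr ⟨fun hu => hx0 ?_, Or.inr ⟨x, rfl⟩⟩) fun t ht => ?_
    · have h0 : (0 : Fin (n + 1)) ∈ ({x} : Finset (Fin (n + 1))) := hu ▸ mem_univ 0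
      exact (mem_singleton.mp h0).symm
    obtain ⟨y, hy0, rfl⟩ := (zero_mem_or_eq_singleton hT ht).resolve_left (h t ht)
    by_cases hxy : x = y
    · exact Or.inl (by rw [hxy])
    · refine Or.inr (Or.inr fun hconn => ?_)
      rcases induce_connected_iff.mp hconn with h0 | ⟨z, hz⟩
      · simp only [mem_union, mem_singleton] at h0
        exact h0.elim (fun h => hx0 h.symm) fun h => hy0 h.symm
      · have hx := hz ▸ mem_union_left {y} (mem_singleton_self x)
        have hy := hz ▸ mem_union_right {x} (mem_singleton_self y)
        exact hxy ((mem_singleton.mp hx).trans (mem_singleton.mp hy).symm)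

theorem insert_zero_singletonNodes_mem (hT : IsTubingF (St n) T)
    (hmax : ∀ U, IsTubingF (St n) U → T ⊆ U → U = T) {c : Finset (Fin (n + 1))}
    (hc : c ∈ T) (h0 : 0 ∈ c) : insert 0 (singletonNodes T) ∈ T := by
  have hsub := insert_zero_singletonNodes_subset hT hc h0
  refine mem_of_isTubeF_of_compatible hT hmax (isTubeF_iff.mpr
    ⟨fun hu => (hT.1 c hc).2.1 (univ_subset_iff.mp (hu ▸ hsub)), Or.inl (mem_insert_self _ _)⟩)
    fun t ht => ?_
  rcases zero_mem_or_eq_singleton hT ht with ht0 | ⟨x, hx0, rfl⟩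
  · exact Or.inl (insert_zero_singletonNodes_subset hT ht ht0)
  · exact Or.inr (Or.inl (singleton_subset_iff.mpr
      (mem_insert_of_mem (mem_singletonNodes.mpr ⟨hx0, ht⟩))))

/-- Adding `univ` makes this chain closed under one-point extensions when `T` is maximal. -/
def zeroChain (T : Finset (Finset (Fin (n + 1)))) : Finset (Finset (Fin (n + 1))) :=
  insert univ (T.filter fun s => 0 ∈ s)

theorem mem_zeroChain {s : Finset (Fin (n + 1))} :
    s ∈ zeroChain T ↔ s = univ ∨ s ∈ T ∧ 0 ∈ s := by
  simp [zeroChain]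

theorem subset_or_subset_of_mem_zeroChain (hT : IsTubingF (St n) T) {c d : Finset (Fin (n + 1))}
    (hc : c ∈ zeroChain T) (hd : d ∈ zeroChain T) : c ⊆ d ∨ d ⊆ c := by
  rcases mem_zeroChain.mp hc with rfl | ⟨hc, hc0⟩
  · exact Or.inr (subset_univ d)
  rcases mem_zeroChain.mp hd with rfl | ⟨hd, -⟩
  · exact Or.inl (subset_univ c)
  exact subset_or_subset_of_zero_mem hT hc hd hc0

theorem exists_insert_mem_zeroChain (hT : IsTubingF (St n) T)
    (hmax : ∀ U, IsTubingF (St n) U → T ⊆ U → U = T) {c : Finset (Fin (n + 1))}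
    (hc : c ∈ zeroChain T) (hcu : c ≠ univ) : ∃ y ∉ c, insert y c ∈ zeroChain T := by
  obtain ⟨hcT, hc0⟩ := (mem_zeroChain.mp hc).resolve_left hcu
  -- `d` is the successor of `c` in the chain; any `y ∈ d \ c` gives a tube nested with all of `T`
  obtain ⟨d, hd, hdmin⟩ := ((zeroChain T).filter (c ⊂ ·)).exists_min_image card
    ⟨univ, mem_filter.mpr ⟨mem_insert_self _ _, (subset_univ c).ssubset_of_ne hcu⟩⟩
  obtain ⟨hdZ, hcd⟩ := mem_filter.mp hd
  obtain ⟨y, hyd, hyc⟩ := exists_of_ssubset hcd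
  have hyc_d : insert y c ⊆ d := insert_subset hyd hcd.subset
  have hgap : ∀ t ∈ zeroChain T, t ⊆ c ∨ d ⊆ t := by
    intro t ht
    rcases subset_or_subset_of_mem_zeroChain hT hc ht with hct | htc
    · rcases eq_or_ne c t with rfl | hne
      · exact Or.inl subset_rfl
      have hdt : d.card ≤ t.card :=
        hdmin t (mem_filter.mpr ⟨ht, Finset.ssubset_iff_subset_ne.mpr ⟨hct, hne⟩⟩)
      rcases subset_or_subset_of_mem_zeroChain hT hdZ ht with h | h
      exacts [Or.inr h, Or.inr (eq_of_subset_of_card_le h hdt).ge]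
    · exact Or.inl htc
  refine ⟨y, hyc, mem_zeroChain.mpr ?_⟩
  by_cases hu : insert y c = univ
  · exact Or.inl hu
  refine Or.inr ⟨mem_of_isTubeF_of_compatible hT hmax
    (isTubeF_iff.mpr ⟨hu, Or.inl (mem_insert_of_mem hc0)⟩) fun t ht => ?_, mem_insert_of_mem hc0⟩
  rcases zero_mem_or_eq_singleton hT ht with ht0 | ⟨x, hx0, rfl⟩
  · rcases hgap t (mem_zeroChain.mpr (Or.inr ⟨ht, ht0⟩)) with htc | hdt
    exacts [Or.inr (Or.inl (htc.trans (subset_insert y c))), Or.inl (hyc_d.trans hdt)]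
  · exact Or.inr (Or.inl (singleton_subset_iff.mpr
      (mem_insert_of_mem (mem_of_singleton_mem hT ht hx0 hcT hc0))))

theorem mem_tubOf_iff {r : ℕ} {u : List (Fin (n + 1))} {s : Finset (Fin (n + 1))} :
    s ∈ tubOf n r u ↔ (∃ x ∈ u.take r, s = {x}) ∨
      ∃ k, r ≤ k ∧ k < n ∧ s = insert 0 (u.take k).toFinset := by
  simp only [tubOf, mem_union, List.mem_toFinset, List.mem_map, mem_image, mem_range,
    ← List.toFinset_append, ← List.take_add]
  refine or_congr ⟨fun ⟨x, hx, h⟩ => ⟨x, hx, h.symm⟩, fun ⟨x, hx, h⟩ => ⟨x, hx, h.symm⟩⟩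
    ⟨fun ⟨j, hj, h⟩ => ⟨r + j, by omega, by omega, h.symm⟩, fun ⟨k, hrk, hkn, h⟩ => ?_⟩
  exact ⟨k - r, by omega, by rw [Nat.add_sub_cancel' hrk, h]⟩

theorem singleton_mem_tubOf_iff {r : ℕ} {u : List (Fin (n + 1))} {x : Fin (n + 1)} (hx : x ≠ 0) :
    {x} ∈ tubOf n r u ↔ x ∈ u.take r := by
  rw [mem_tubOf_iff]
  constructor
  · rintro (⟨y, hy, hxy⟩ | ⟨k, -, -, hk⟩)
    · rwa [singleton_inj.mp hxy]
    · have h0 : (0 : Fin (n + 1)) ∈ ({x} : Finset (Fin (n + 1))) := hk ▸ mem_insert_self _ _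
      exact absurd (mem_singleton.mp h0).symm hx
  · exact fun hx => Or.inl ⟨x, hx, rfl⟩

structure IsNormalForm (n r : ℕ) (u : List (Fin (n + 1))) : Prop where
  le : r ≤ n
  length_eq : u.length = n
  nodup : u.Nodup
  ne_zero : ∀ x ∈ u, x ≠ 0
  sorted : (u.take r).Pairwise (· < ·)

namespace IsNormalForm

variable {r : ℕ} {u : List (Fin (n + 1))}

theorem card_toFinset_take (h : IsNormalForm n r u) {k : ℕ} (hk : k ≤ n) :
    (u.take k).toFinset.card = k := by
  rw [List.toFinset_card_of_nodup (h.nodup.sublist (List.take_sublist _ _)), List.length_take,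
    h.length_eq, min_eq_left hk]

theorem zero_notMem_toFinset_take (h : IsNormalForm n r u) (k : ℕ) :
    (0 : Fin (n + 1)) ∉ (u.take k).toFinset :=
  fun h0 => h.ne_zero 0 (List.mem_of_mem_take (List.mem_toFinset.mp h0)) rfl

theorem card_insert_zero_toFinset_take (h : IsNormalForm n r u) {k : ℕ} (hk : k ≤ n) :
    (insert 0 (u.take k).toFinset).card = k + 1 := by
  rw [card_insert_of_notMem (h.zero_notMem_toFinset_take k), h.card_toFinset_take hk]

theorem toFinset_eq_erase_zero (h : IsNormalForm n r u) : u.toFinset = univ.erase 0 := by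
  refine eq_of_subset_of_card_le (fun x hx => mem_erase.mpr
    ⟨h.ne_zero x (List.mem_toFinset.mp hx), mem_univ x⟩) ?_
  rw [card_erase_of_mem (mem_univ 0), card_univ, Fintype.card_fin,
    List.toFinset_card_of_nodup h.nodup, h.length_eq, Nat.add_sub_cancel]

end IsNormalForm

theorem eq_tubOf_iff (hT : IsTubingF (St n) T) {r : ℕ} {u : List (Fin (n + 1))}
    (h : IsNormalForm n r u) :
    T = tubOf n r u ↔ (u.take r).toFinset = singletonNodes T ∧
      ∀ k, r ≤ k → k < n → insert 0 (u.take k).toFinset ∈ T := by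
  constructor
  · rintro rfl
    refine ⟨ext fun x => ?_, fun k hrk hkn => mem_tubOf_iff.mpr (Or.inr ⟨k, hrk, hkn, rfl⟩)⟩
    rw [List.mem_toFinset, mem_singletonNodes]
    refine ⟨fun hx => ?_, fun ⟨hx0, hx⟩ => (singleton_mem_tubOf_iff hx0).mp hx⟩
    have hx0 := h.ne_zero x (List.mem_of_mem_take hx)
    exact ⟨hx0, (singleton_mem_tubOf_iff hx0).mpr hx⟩
  rintro ⟨hS, hchain⟩
  ext s
  rw [mem_tubOf_iff]
  constructor
  · intro hs
    rcases zero_mem_or_eq_singleton hT hs with h0 | ⟨x, hx0, rfl⟩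
    · have hlo : r + 1 ≤ s.card := by
        have := card_le_card (insert_zero_singletonNodes_subset hT hs h0)
        rwa [← hS, h.card_insert_zero_toFinset_take h.le] at this
      have hhi : s.card < n + 1 := by
        simpa using (card_lt_iff_ne_univ s).mpr (hT.1 s hs).2.1
      refine Or.inr ⟨s.card - 1, by omega, by omega,
        eq_of_zero_mem_of_card_eq hT hs (hchain _ (by omega) (by omega)) h0 ?_⟩
      rw [h.card_insert_zero_toFinset_take (by omega)]
      omega
    · exact Or.inl ⟨x, List.mem_toFinset.mp (hS ▸ mem_singletonNodes.mpr ⟨hx0, hs⟩), rfl⟩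
  · rintro (⟨x, hx, rfl⟩ | ⟨k, hrk, hkn, rfl⟩)
    · exact (mem_singletonNodes.mp (hS ▸ List.mem_toFinset.mpr hx)).2
    · exact hchain k hrk hkn

theorem IsNormalForm.eq_of_eq_tubOf (hT : IsTubingF (St n) T) {r r' : ℕ}
    {u u' : List (Fin (n + 1))} (h : IsNormalForm n r u) (h' : IsNormalForm n r' u')
    (hu : T = tubOf n r u) (hu' : T = tubOf n r' u') : r = r' ∧ u = u' := by
  obtain ⟨hS, hchain⟩ := (eq_tubOf_iff hT h).mp hu
  obtain ⟨hS', hchain'⟩ := (eq_tubOf_iff hT h').mp hu'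
  obtain rfl : r = r' := by
    rw [← h.card_toFinset_take h.le, ← h'.card_toFinset_take h'.le, hS, hS']
  have htake : u.take r = u'.take r := List.Pairwise.eq_of_mem_iff h.sorted h'.sorted fun x => by
    rw [← List.mem_toFinset, hS, ← hS', List.mem_toFinset]
  refine ⟨rfl, List.eq_of_toFinset_take_eq h.nodup h'.nodup fun k => ?_⟩
  rcases le_or_gt k r with hkr | hrk
  · rw [← min_eq_left hkr, ← List.take_take, htake, List.take_take]
  rcases lt_or_ge k n with hkn | hnk
  · have hcard : (insert 0 (u.take k).toFinset).card = (insert 0 (u'.take k).toFinset).card := by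
      rw [h.card_insert_zero_toFinset_take hkn.le, h'.card_insert_zero_toFinset_take hkn.le]
    rw [← erase_insert (h.zero_notMem_toFinset_take k), eq_of_zero_mem_of_card_eq hT
      (hchain k hrk.le hkn) (hchain' k hrk.le hkn) (mem_insert_self _ _) hcard,
      erase_insert (h'.zero_notMem_toFinset_take k)]
  · rw [List.take_of_length_le (h.length_eq.trans_le hnk),
      List.take_of_length_le (h'.length_eq.trans_le hnk),
      h.toFinset_eq_erase_zero, h'.toFinset_eq_erase_zero]

theorem exists_isNormalForm_eq_tubOf (hT : IsTubingF (St n) T)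
    (hmax : ∀ U, IsTubingF (St n) U → T ⊆ U → U = T)
    (hne : T ≠ (univ.filter fun x => x ≠ (0 : Fin (n + 1))).image
      fun x => ({x} : Finset (Fin (n + 1)))) :
    ∃ r u, IsNormalForm n r u ∧ T = tubOf n r u := by
  set S := singletonNodes T
  obtain ⟨c, hc, hc0⟩ := exists_zero_mem hT hmax hne
  have hS0 : (0 : Fin (n + 1)) ∉ S := zero_notMem_singletonNodes
  have ht₀ : insert 0 S ∈ zeroChain T :=
    mem_zeroChain.mpr (Or.inr ⟨insert_zero_singletonNodes_mem hT hmax hc hc0, mem_insert_self _ _⟩)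
  obtain ⟨_, ⟨rest, rfl⟩, hnd, hlen, hl⟩ := List.exists_isPrefix_forall_toFinset_take
    (P := (· ∈ zeroChain T)) (N := n + 1) (l₀ := 0 :: S.sort)
    (fun s hs hcard => exists_insert_mem_zeroChain hT hmax hs
      ((card_lt_iff_ne_univ s).mp (by simpa using hcard)))
    (List.nodup_cons.mpr ⟨by simpa using hS0, sort_nodup _ _⟩) (by simpa using ht₀)
    (by simpa using (card_insert_of_notMem hS0).symm.trans_le (card_le_univ (insert 0 S)))
  set u := S.sort ++ rest
  rw [List.cons_append] at hnd hlen hl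
  have htake : u.take S.card = S.sort := List.take_left' (length_sort _)
  have h : IsNormalForm n S.card u :=
    { le := by
        rw [List.length_cons, List.length_append, length_sort] at hlen
        omega
      length_eq := by simpa [u] using hlen
      nodup := hnd.of_cons
      ne_zero := fun x hx hx0 => (List.nodup_cons.mp hnd).1 (hx0 ▸ hx)
      sorted := htake ▸ (sortedLT_sort S).pairwise }
  refine ⟨S.card, u, h, (eq_tubOf_iff hT h).mpr ⟨by rw [htake, sort_toFinset], fun k hrk hkn => ?_⟩⟩
  have hk := hl (k + 1) (by simpa using hrk) (by omega)
  rw [List.take_succ_cons, List.toFinset_cons] at hk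
  refine ((mem_zeroChain.mp hk).resolve_left fun hu => ?_).1
  have := h.card_insert_zero_toFinset_take hkn.le
  rw [hu, card_univ, Fintype.card_fin] at this
  omega

end St

/-- Every maximal tubing of `St_n` other than `{{1},…,{n}}` has a unique normal form
`Tub_r(u₁,…,u_n)`: a unique `0 ≤ r ≤ n`, unique `u₁ < ⋯ < u_r` and a unique ordering
`(u_{r+1},…,u_n)` of the remaining outer nodes. -/
theorem maxTubing_star_normal_form (n : ℕ) (T : Finset (Finset (Fin (n + 1))))
    (hT : IsTubingF (St n) T)
    (hmax : ∀ U, IsTubingF (St n) U → T ⊆ U → U = T)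
    (hne : T ≠ (Finset.univ.filter fun x => x ≠ (0 : Fin (n + 1))).image
      fun x => ({x} : Finset (Fin (n + 1)))) :
    ∃! p : ℕ × List (Fin (n + 1)),
      p.1 ≤ n ∧ p.2.length = n ∧ p.2.Nodup ∧ (∀ x ∈ p.2, x ≠ 0) ∧
        List.Pairwise (· < ·) (p.2.take p.1) ∧ T = tubOf n p.1 p.2 := by
  obtain ⟨r, u, h, hu⟩ := St.exists_isNormalForm_eq_tubOf hT hmax hne
  refine ⟨(r, u), ⟨h.le, h.length_eq, h.nodup, h.ne_zero, h.sorted, hu⟩, ?_⟩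
  rintro ⟨r', u'⟩ ⟨h₁, h₂, h₃, h₄, h₅, hu'⟩
  obtain ⟨rfl, rfl⟩ := St.IsNormalForm.eq_of_eq_tubOf hT ⟨h₁, h₂, h₃, h₄, h₅⟩ h hu' hu
  rfl
end

section
/- The number of maximal tubings of the star graph St_n equals ∑_{k=0}^n n!/k!. -/
open Nat Finset

namespace StarProof

variable {n : ℕ}

lemma st_adj {a b : Fin (n+1)} : (St n).Adj a b ↔ a ≠ b ∧ (a = 0 ∨ b = 0) := by
  simp [St, SimpleGraph.fromRel_adj]

lemma conn_of_zero {s : Finset (Fin (n+1))} (h0 : (0:Fin (n+1)) ∈ s) :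
    ((St n).induce (↑s : Set (Fin (n+1)))).Connected := by
  rw [SimpleGraph.connected_iff]
  refine ⟨?_, ⟨⟨0, h0⟩⟩⟩
  have key : ∀ a : (↑s : Set (Fin (n+1))), ((St n).induce (↑s : Set (Fin (n+1)))).Reachable a ⟨0, h0⟩ := by
    rintro ⟨a, ha⟩
    by_cases h : a = 0
    · subst h; exact SimpleGraph.Reachable.refl _
    · refine SimpleGraph.Adj.reachable ?_
      rw [SimpleGraph.comap_adj, st_adj]
      exact ⟨by simpa using h, Or.inr rfl⟩
  intro a b
  exact (key a).trans (key b).symm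

lemma not_conn_of_two {s : Finset (Fin (n+1))} (h0 : (0:Fin (n+1)) ∉ s) {a b : Fin (n+1)}
    (ha : a ∈ s) (hb : b ∈ s) (hab : a ≠ b) :
    ¬ ((St n).induce (↑s : Set (Fin (n+1)))).Connected := by
  intro h
  obtain ⟨w⟩ := h.preconnected ⟨a, ha⟩ ⟨b, hb⟩
  cases w with
  | nil => exact hab rfl
  | cons hadj p =>
      rw [SimpleGraph.comap_adj, st_adj] at hadj
      rcases hadj.2 with h' | h'
      · exact h0 (h' ▸ ha)
      · exact h0 (h' ▸ (Subtype.coe_prop _))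

lemma singleton_conn (a : Fin (n+1)) :
    ((St n).induce (↑({a} : Finset (Fin (n+1))) : Set (Fin (n+1)))).Connected := by
  rw [SimpleGraph.connected_iff]
  refine ⟨?_, ⟨⟨a, by simp⟩⟩⟩
  rintro ⟨x, hx⟩ ⟨y, hy⟩
  simp only [Finset.coe_singleton, Set.mem_singleton_iff] at hx hy
  subst hx; subst hy
  exact SimpleGraph.Reachable.refl _

lemma isTube_iff {s : Finset (Fin (n+1))} :
    IsTubeF (St n) s ↔ (s ≠ univ ∧ 0 ∈ s) ∨ (∃ x : Fin n, s = {Fin.succ x}) := by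
  constructor
  · rintro ⟨hne, huniv, hconn⟩
    by_cases h0 : (0 : Fin (n+1)) ∈ s
    · exact Or.inl ⟨huniv, h0⟩
    · refine Or.inr ?_
      obtain ⟨a, ha⟩ := hne
      have hs : s = {a} := by
        ext b
        refine ⟨fun hb => ?_, fun hb => by simpa [Finset.mem_singleton.1 hb] using ha⟩
        by_contra hba
        exact not_conn_of_two h0 hb ha (fun h => hba (by simp [h])) hconn
      have ha0 : a ≠ 0 := fun h => h0 (h ▸ ha)
      obtain ⟨x, hx⟩ := Fin.exists_succ_eq.2 ha0
      exact ⟨x, by rw [hs, hx]⟩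
  · rintro (⟨huniv, h0⟩ | ⟨x, rfl⟩)
    · exact ⟨⟨0, h0⟩, huniv, conn_of_zero h0⟩
    · refine ⟨⟨_, Finset.mem_singleton_self _⟩, ?_, singleton_conn _⟩
      intro h
      have := Finset.card_univ (α := Fin (n+1))
      rw [← h, Finset.card_singleton, Fintype.card_fin] at this
      have hx : (x : ℕ) < n := x.2
      omega

variable {T : Finset (Finset (Fin (n+1)))}

/-- two zero-tubes in a tubing are nested -/
lemma nested_of_mem {s u : Finset (Fin (n+1))} (hT : IsTubingF (St n) T)
    (hs : s ∈ T) (hu : u ∈ T) (h0 : (0:Fin (n+1)) ∈ s ∨ (0:Fin (n+1)) ∈ u) :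
    s ⊆ u ∨ u ⊆ s := by
  rcases hT.2 s hs u hu with h | h | h
  · exact Or.inl h
  · exact Or.inr h
  · exact absurd (conn_of_zero (Finset.mem_union.2 (h0.imp id id))) h

lemma singleton_subset_of_zero {y : Fin (n+1)} {u : Finset (Fin (n+1))}
    (hT : IsTubingF (St n) T) (hy : {y} ∈ T) (hu : u ∈ T) (h0 : (0:Fin (n+1)) ∈ u)
    (hy0 : y ≠ 0) : y ∈ u := by
  rcases nested_of_mem hT hy hu (Or.inr h0) with h | h
  · exact h (Finset.mem_singleton_self y)
  · exact absurd (Finset.mem_singleton.1 (h h0)).symm hy0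

/-- data indexing maximal tubings -/
def Dat (n : ℕ) := Σ S : Finset (Fin n), ({x : Fin n // x ∉ S} ≃ Fin (n - S.card))

noncomputable instance : Fintype (Dat n) := by unfold Dat; exact Sigma.instFintype

open scoped Classical in
/-- the chain sets -/
noncomputable def K (S : Finset (Fin n)) (e : {x : Fin n // x ∉ S} ≃ Fin (n - S.card)) (t : ℕ) :
    Finset (Fin (n+1)) :=
  insert 0 ((S ∪ univ.filter fun x => ∃ h : x ∉ S, ((e ⟨x, h⟩ : ℕ) < t)).image Fin.succ)

noncomputable def FF (d : Dat n) : Finset (Finset (Fin (n+1))) :=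
  d.1.image (fun x => {Fin.succ x}) ∪ (range (n - d.1.card)).image (K d.1 d.2)

lemma mem_K {S : Finset (Fin n)} {e : {x : Fin n // x ∉ S} ≃ Fin (n - S.card)} {t : ℕ}
    {y : Fin (n+1)} :
    y ∈ K S e t ↔ y = 0 ∨ ∃ x : Fin n, Fin.succ x = y ∧ (x ∈ S ∨ ∃ h : x ∉ S, ((e ⟨x, h⟩ : ℕ) < t)) := by
  classical
  simp only [K, Finset.mem_insert, Finset.mem_image, Finset.mem_union, Finset.mem_filter,
    Finset.mem_univ, true_and]
  constructor
  · rintro (h | ⟨x, hx, rfl⟩)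
    · exact Or.inl h
    · exact Or.inr ⟨x, rfl, hx⟩
  · rintro (h | ⟨x, rfl, hx⟩)
    · exact Or.inl h
    · exact Or.inr ⟨x, hx, rfl⟩

lemma zero_mem_K {S : Finset (Fin n)} {e : {x : Fin n // x ∉ S} ≃ Fin (n - S.card)} {t : ℕ} :
    (0 : Fin (n+1)) ∈ K S e t := by classical exact Finset.mem_insert_self _ _

lemma succ_mem_K {S : Finset (Fin n)} {e : {x : Fin n // x ∉ S} ≃ Fin (n - S.card)} {t : ℕ}
    {x : Fin n} :
    Fin.succ x ∈ K S e t ↔ (x ∈ S ∨ ∃ h : x ∉ S, ((e ⟨x, h⟩ : ℕ) < t)) := by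
  rw [mem_K]
  constructor
  · rintro (h | ⟨x', hx', hh⟩)
    · exact absurd h (Fin.succ_ne_zero x)
    · rwa [← Fin.succ_injective _ hx']
  · intro h; exact Or.inr ⟨x, rfl, h⟩

lemma K_mono {S : Finset (Fin n)} {e : {x : Fin n // x ∉ S} ≃ Fin (n - S.card)} {t t' : ℕ}
    (h : t ≤ t') : K S e t ⊆ K S e t' := by
  intro y hy
  rw [mem_K] at hy ⊢
  refine hy.imp id ?_
  rintro ⟨x, rfl, hx⟩
  exact ⟨x, rfl, hx.imp id (fun ⟨h', hlt⟩ => ⟨h', hlt.trans_le h⟩)⟩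

lemma card_filt {S : Finset (Fin n)} (e : {x : Fin n // x ∉ S} ≃ Fin (n - S.card)) {t : ℕ}
    (ht : t ≤ n - S.card) :
    (univ.filter fun x => ∃ h : x ∉ S, ((e ⟨x, h⟩ : ℕ) < t)).card = t := by
  classical
  rw [← Nat.card_eq_finsetCard]
  have : {x // x ∈ univ.filter fun x => ∃ h : x ∉ S, ((e ⟨x, h⟩ : ℕ) < t)} ≃
      {i : Fin (n - S.card) // (i : ℕ) < t} := by
    refine Equiv.mk
      (fun p => ⟨e ⟨p.1, (Finset.mem_filter.1 p.2).2.fst⟩, (Finset.mem_filter.1 p.2).2.snd⟩)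
      (fun i => ⟨(e.symm i.1).1, Finset.mem_filter.2 ⟨Finset.mem_univ _, (e.symm i.1).2, by
        simpa using i.2⟩⟩) ?_ ?_
    · rintro ⟨x, hx⟩; ext; simp
    · rintro ⟨i, hi⟩; ext; simp
  have e2 : {i : Fin (n - S.card) // (i : ℕ) < t} ≃ Fin t :=
    Equiv.mk (fun i => ⟨i.1, i.2⟩) (fun j => ⟨⟨j.1, lt_of_lt_of_le j.2 ht⟩, j.2⟩)
      (fun i => by ext; rfl) (fun j => by ext; rfl)
  rw [Nat.card_eq_of_equiv_fin (this.trans e2)]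

lemma card_K {S : Finset (Fin n)} (e : {x : Fin n // x ∉ S} ≃ Fin (n - S.card)) {t : ℕ}
    (ht : t ≤ n - S.card) :
    (K S e t).card = S.card + t + 1 := by
  classical
  rw [K]
  rw [Finset.card_insert_of_notMem (by
    simp only [Finset.mem_image]
    rintro ⟨x, -, hx⟩
    exact Fin.succ_ne_zero x hx)]
  rw [Finset.card_image_of_injective _ (Fin.succ_injective n)]
  rw [Finset.card_union_of_disjoint (by
    rw [Finset.disjoint_left]
    intro x hxS hxf
    exact (Finset.mem_filter.1 hxf).2.fst hxS)]
  rw [card_filt e ht]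

lemma K_ne_univ {S : Finset (Fin n)} (e : {x : Fin n // x ∉ S} ≃ Fin (n - S.card)) {t : ℕ}
    (ht : t < n - S.card) : K S e t ≠ univ := by
  intro h
  have h1 : (K S e t).card = S.card + t + 1 := card_K e ht.le
  rw [h, Finset.card_univ, Fintype.card_fin] at h1
  have h2 : S.card ≤ n := by
    have := Finset.card_le_card (Finset.subset_univ S)
    simpa using this
  omega

lemma S_card_le (S : Finset (Fin n)) : S.card ≤ n := by
  have := Finset.card_le_card (Finset.subset_univ S)
  simpa using this

lemma mem_FF {d : Dat n} {u : Finset (Fin (n+1))} :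
    u ∈ FF d ↔ (∃ x ∈ d.1, u = {Fin.succ x}) ∨ ∃ t < n - d.1.card, u = K d.1 d.2 t := by
  classical
  simp only [FF, Finset.mem_union, Finset.mem_image, Finset.mem_range]
  constructor
  · rintro (⟨x, hx, rfl⟩ | ⟨t, ht, rfl⟩)
    · exact Or.inl ⟨x, hx, rfl⟩
    · exact Or.inr ⟨t, ht, rfl⟩
  · rintro (⟨x, hx, rfl⟩ | ⟨t, ht, rfl⟩)
    · exact Or.inl ⟨x, hx, rfl⟩
    · exact Or.inr ⟨t, ht, rfl⟩

lemma mem_FF' {S : Finset (Fin n)} {e : {x : Fin n // x ∉ S} ≃ Fin (n - S.card)}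
    {u : Finset (Fin (n+1))} :
    u ∈ FF ⟨S, e⟩ ↔ (∃ x ∈ S, u = {Fin.succ x}) ∨ ∃ t < n - S.card, u = K S e t :=
  mem_FF

lemma FF_isTubing (d : Dat n) : IsTubingF (St n) (FF d) := by
  constructor
  · intro u hu
    rcases mem_FF.1 hu with ⟨x, hx, rfl⟩ | ⟨t, ht, rfl⟩
    · exact isTube_iff.2 (Or.inr ⟨x, rfl⟩)
    · exact isTube_iff.2 (Or.inl ⟨K_ne_univ d.2 ht, zero_mem_K⟩)
  · intro a ha b hb
    rcases mem_FF.1 ha with ⟨x, hx, rfl⟩ | ⟨t, ht, rfl⟩ <;>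
      rcases mem_FF.1 hb with ⟨y, hy, rfl⟩ | ⟨t', ht', rfl⟩
    · by_cases hxy : x = y
      · subst hxy; exact Or.inl (subset_refl _)
      · refine Or.inr (Or.inr (not_conn_of_two (a := Fin.succ x) (b := Fin.succ y) ?_ ?_ ?_ ?_))
        · simp only [Finset.mem_union, Finset.mem_singleton]
          rintro (h | h) <;> exact Fin.succ_ne_zero _ h.symm
        · exact Finset.mem_union_left _ (Finset.mem_singleton_self _)
        · exact Finset.mem_union_right _ (Finset.mem_singleton_self _)
        · exact fun h => hxy (Fin.succ_injective _ h)
    · exact Or.inl (Finset.singleton_subset_iff.2 (succ_mem_K.2 (Or.inl hx)))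
    · exact Or.inr (Or.inl (Finset.singleton_subset_iff.2 (succ_mem_K.2 (Or.inl hy))))
    · rcases le_total t t' with h | h
      · exact Or.inl (K_mono h)
      · exact Or.inr (Or.inl (K_mono h))

lemma FF_maximal (d : Dat n) (U : Finset (Finset (Fin (n+1)))) (hU : IsTubingF (St n) U)
    (hsub : FF d ⊆ U) : U = FF d := by
  classical
  obtain ⟨S, e⟩ := d
  refine Finset.Subset.antisymm ?_ hsub
  intro u hu
  have hutube := hU.1 u hu
  have hsn : S.card ≤ n := S_card_le S
  rcases isTube_iff.1 hutube with ⟨huniv, h0u⟩ | ⟨x, rfl⟩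
  · -- zero tube
    have hsingsub : ∀ x ∈ S, Fin.succ x ∈ u := by
      intro x hx
      exact singleton_subset_of_zero hU (hsub (mem_FF'.2 (Or.inl ⟨x, hx, rfl⟩))) hu h0u
        (Fin.succ_ne_zero x)
    by_cases hscard : S.card = n
    · exfalso
      apply huniv
      rw [Finset.eq_univ_iff_forall]
      intro y
      by_cases hy : y = 0
      · exact hy ▸ h0u
      · obtain ⟨x, rfl⟩ := Fin.exists_succ_eq.2 hy
        have hSu : S = Finset.univ := Finset.eq_univ_of_card S (by simp [hscard])
        exact hsingsub x (hSu ▸ Finset.mem_univ x)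
    · have hlt : 0 < n - S.card := by omega
      have hKmaxmem : K S e (n - S.card - 1) ∈ U :=
        hsub (mem_FF'.2 (Or.inr ⟨n - S.card - 1, by omega, rfl⟩))
      have hcardKmax : (K S e (n - S.card - 1)).card = n := by
        rw [card_K e (by omega)]; omega
      have hucard : u.card ≤ n := by
        have h1 : u.card ≤ n + 1 := by
          have := Finset.card_le_card (Finset.subset_univ u); simpa using this
        rcases Nat.lt_or_ge u.card (n+1) with h | h
        · omega
        · exfalso
          exact huniv (Finset.eq_univ_of_card u (by simpa using le_antisymm (by
              have := Finset.card_le_card (Finset.subset_univ u); simpa using this) h))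
      rcases nested_of_mem hU hu hKmaxmem (Or.inl h0u) with hsub1 | hsub2
      · -- u ⊆ Kmax ; find the right t
        set P : ℕ → Prop := fun t => K S e t ⊆ u with hP
        have hP0 : P 0 := by
          intro y hy
          rcases mem_K.1 hy with rfl | ⟨x, rfl, hx | ⟨h', hlt'⟩⟩
          · exact h0u
          · exact hsingsub x hx
          · omega
        set t0 := Nat.findGreatest P (n - S.card - 1) with ht0
        have hPt0 : P t0 := Nat.findGreatest_spec (Nat.zero_le _) hP0
        rcases Nat.lt_or_ge t0 (n - S.card - 1) with hcase | hcase
        · have hnP : ¬ P (t0 + 1) :=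
            Nat.findGreatest_is_greatest (show Nat.findGreatest P (n - S.card - 1) < t0 + 1 by omega) (by omega)
          have hmem1 : K S e (t0 + 1) ∈ U :=
            hsub (mem_FF'.2 (Or.inr ⟨t0 + 1, by omega, rfl⟩))
          have husub : u ⊆ K S e (t0 + 1) := by
            rcases nested_of_mem hU hu hmem1 (Or.inl h0u) with h | h
            · exact h
            · exact absurd h hnP
          have hc1 : (K S e t0).card = S.card + t0 + 1 := card_K e (by omega)
          have hc2 : (K S e (t0+1)).card = S.card + t0 + 2 := by
            rw [card_K e (by omega)]; omega
          rcases Nat.lt_or_ge u.card (S.card + t0 + 2) with hcc | hcc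
          · have : K S e t0 = u := Finset.eq_of_subset_of_card_le hPt0 (by omega)
            rw [← this]
            exact mem_FF'.2 (Or.inr ⟨t0, by omega, rfl⟩)
          · have : u = K S e (t0+1) := Finset.eq_of_subset_of_card_le husub (by omega)
            exact absurd (by rw [← this] : K S e (t0+1) ⊆ u) hnP
        · have ht0e : t0 = n - S.card - 1 := by
            have := Nat.findGreatest_le (P := P) (n - S.card - 1); omega
          have : u = K S e (n - S.card - 1) :=
            Finset.Subset.antisymm hsub1 (ht0e ▸ hPt0)
          rw [this]
          exact mem_FF'.2 (Or.inr ⟨n - S.card - 1, by omega, rfl⟩)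
      · -- Kmax ⊆ u forces equality
        have : K S e (n - S.card - 1) = u :=
          Finset.eq_of_subset_of_card_le hsub2 (by omega)
        rw [← this]
        exact mem_FF'.2 (Or.inr ⟨n - S.card - 1, by omega, rfl⟩)
  · -- singleton
    by_cases hscard : S.card = n
    · have hSu : S = Finset.univ := Finset.eq_univ_of_card S (by simp [hscard])
      exact mem_FF'.2 (Or.inl ⟨x, hSu ▸ Finset.mem_univ x, rfl⟩)
    · have hK0 : K S e 0 ∈ U := hsub (mem_FF'.2 (Or.inr ⟨0, by omega, rfl⟩))
      have hxK : Fin.succ x ∈ K S e 0 :=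
        singleton_subset_of_zero hU hu hK0 zero_mem_K (Fin.succ_ne_zero x)
      rcases succ_mem_K.1 hxK with hx | ⟨h', hlt'⟩
      · exact mem_FF'.2 (Or.inl ⟨x, hx, rfl⟩)
      · omega

section Surj
variable {T : Finset (Finset (Fin (n+1)))}

/-- the set of indices whose singleton is in T -/
noncomputable def Sset (T : Finset (Finset (Fin (n+1)))) : Finset (Fin n) :=
  univ.filter fun x => ({Fin.succ x} : Finset (Fin (n+1))) ∈ T

lemma mem_Sset {x : Fin n} : x ∈ Sset T ↔ ({Fin.succ x} : Finset (Fin (n+1))) ∈ T := by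
  simp [Sset]

/-- the minimal zero-tube candidate -/
noncomputable def mset (T : Finset (Finset (Fin (n+1)))) : Finset (Fin (n+1)) :=
  insert 0 ((Sset T).image Fin.succ)

lemma card_mset : (mset T).card = (Sset T).card + 1 := by
  rw [mset, Finset.card_insert_of_notMem (by
    simp only [Finset.mem_image]; rintro ⟨x, -, hx⟩; exact Fin.succ_ne_zero x hx)]
  rw [Finset.card_image_of_injective _ (Fin.succ_injective n)]

lemma classify (hT : IsTubingF (St n) T) {u : Finset (Fin (n+1))} (hu : u ∈ T) :
    ((0:Fin (n+1)) ∈ u ∧ u ≠ univ) ∨ ∃ x ∈ Sset T, u = {Fin.succ x} := by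
  rcases isTube_iff.1 (hT.1 u hu) with ⟨h1, h2⟩ | ⟨x, rfl⟩
  · exact Or.inl ⟨h2, h1⟩
  · exact Or.inr ⟨x, mem_Sset.2 hu, rfl⟩

lemma mset_subset (hT : IsTubingF (St n) T) {c : Finset (Fin (n+1))} (hc : c ∈ T)
    (h0 : (0:Fin (n+1)) ∈ c) : mset T ⊆ c := by
  intro y hy
  rcases Finset.mem_insert.1 hy with rfl | hy
  · exact h0
  · obtain ⟨x, hx, rfl⟩ := Finset.mem_image.1 hy
    exact singleton_subset_of_zero hT (mem_Sset.1 hx) hc h0 (Fin.succ_ne_zero x)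

lemma card_zero_tube (hT : IsTubingF (St n) T) {c : Finset (Fin (n+1))} (hc : c ∈ T)
    (h0 : (0:Fin (n+1)) ∈ c) : (Sset T).card + 1 ≤ c.card ∧ c.card ≤ n := by
  constructor
  · rw [← card_mset]; exact Finset.card_le_card (mset_subset hT hc h0)
  · have hne : c ≠ univ := (hT.1 c hc).2.1
    have := Finset.card_le_card (Finset.subset_univ c)
    rcases Nat.lt_or_ge c.card (n+1) with h | h
    · omega
    · exact absurd (Finset.eq_univ_of_card c (by simpa using le_antisymm (by simpa using this) h)) hne

lemma zero_tube_unique (hT : IsTubingF (St n) T) {c d : Finset (Fin (n+1))} (hc : c ∈ T)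
    (hd : d ∈ T) (h0c : (0:Fin (n+1)) ∈ c) (h0d : (0:Fin (n+1)) ∈ d)
    (hcard : c.card = d.card) : c = d := by
  rcases nested_of_mem hT hc hd (Or.inl h0c) with h | h
  · exact Finset.eq_of_subset_of_card_le h (le_of_eq hcard.symm)
  · exact (Finset.eq_of_subset_of_card_le h (le_of_eq hcard)).symm

/-- helper: insert a set compatible with everything -/
lemma insert_tubing (hT : IsTubingF (St n) T) {u : Finset (Fin (n+1))}
    (hu : IsTubeF (St n) u) (key : ∀ c ∈ T, u ⊆ c ∨ c ⊆ u) :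
    IsTubingF (St n) (insert u T) := by
  classical
  constructor
  · intro v hv
    rcases Finset.mem_insert.1 hv with rfl | hv
    · exact hu
    · exact hT.1 v hv
  · intro v hv w hw
    rcases Finset.mem_insert.1 hv with hv' | hv'
    · rcases Finset.mem_insert.1 hw with hw' | hw'
      · rw [hv', hw']; exact Or.inl (subset_refl _)
      · rw [hv']; exact (key w hw').elim Or.inl (fun h => Or.inr (Or.inl h))
    · rcases Finset.mem_insert.1 hw with hw' | hw'
      · rw [hw']; exact (key v hv').elim (fun h => Or.inr (Or.inl h)) Or.inl
      · exact hT.2 v hv' w hw'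

lemma mset_tube (hlt : (Sset T).card < n) : IsTubeF (St n) (mset T) := by
  refine isTube_iff.2 (Or.inl ⟨?_, Finset.mem_insert_self _ _⟩)
  intro h
  have := card_mset (T := T)
  rw [h, Finset.card_univ, Fintype.card_fin] at this
  omega

lemma mset_key (hT : IsTubingF (St n) T) : ∀ c ∈ T, mset T ⊆ c ∨ c ⊆ mset T := by
  intro c hc
  rcases classify hT hc with ⟨h0, -⟩ | ⟨x, hx, rfl⟩
  · exact Or.inl (mset_subset hT hc h0)
  · exact Or.inr (Finset.singleton_subset_iff.2
      (Finset.mem_insert_of_mem (Finset.mem_image_of_mem _ hx)))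

lemma mset_mem (hT : IsTubingF (St n) T)
    (hmax : ∀ U, IsTubingF (St n) U → T ⊆ U → U = T) (hlt : (Sset T).card < n) :
    mset T ∈ T := by
  have htub := insert_tubing hT (mset_tube hlt) (mset_key hT)
  have heq := hmax _ htub (Finset.subset_insert _ _)
  have h2 := Finset.mem_insert_self (mset T) T
  rwa [heq] at h2

lemma exists_zero_tube (hT : IsTubingF (St n) T)
    (hmax : ∀ U, IsTubingF (St n) U → T ⊆ U → U = T) {k : ℕ}
    (hk1 : (Sset T).card + 1 ≤ k) (hk2 : k ≤ n) :
    ∃ c ∈ T, (0:Fin (n+1)) ∈ c ∧ c.card = k := by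
  classical
  by_contra hcon
  push_neg at hcon
  set s := (Sset T).card with hs
  have hm : mset T ∈ T := mset_mem hT hmax (by omega)
  set B := T.filter (fun c => (0:Fin (n+1)) ∈ c ∧ c.card ≤ k) with hB
  have hmB : mset T ∈ B := by
    refine Finset.mem_filter.2 ⟨hm, Finset.mem_insert_self _ _, ?_⟩
    rw [card_mset]; omega
  obtain ⟨b, hbB, hbmax⟩ := Finset.exists_max_image B Finset.card ⟨_, hmB⟩
  obtain ⟨hbT, hb0, hbk⟩ := Finset.mem_filter.1 hbB
  have hb_all : ∀ c ∈ B, c ⊆ b := by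
    intro c hc
    obtain ⟨hcT, hc0, -⟩ := Finset.mem_filter.1 hc
    rcases nested_of_mem hT hcT hbT (Or.inl hc0) with h | h
    · exact h
    · exact le_of_eq (Finset.eq_of_subset_of_card_le h (hbmax c hc)).symm
  have hbklt : b.card < k := by
    rcases Nat.lt_or_ge b.card k with h | h
    · exact h
    · exact absurd (le_antisymm hbk h) (hcon b hbT hb0)
  have hbm : mset T ⊆ b := hb_all _ hmB
  set A := T.filter (fun c => (0:Fin (n+1)) ∈ c ∧ k < c.card) with hA
  have hAB : ∀ c ∈ T, (0:Fin (n+1)) ∈ c → c ∈ B ∨ c ∈ A := by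
    intro c hc h0
    rcases Nat.lt_or_ge k c.card with h | h
    · exact Or.inr (Finset.mem_filter.2 ⟨hc, h0, h⟩)
    · exact Or.inl (Finset.mem_filter.2 ⟨hc, h0, h⟩)
  have hstep : ∃ u, b ⊆ u ∧ u.card = k ∧ u ≠ univ ∧ (∀ c ∈ A, u ⊆ c) := by
    rcases Finset.eq_empty_or_nonempty A with hAe | hAne
    · obtain ⟨y, hy⟩ : ∃ y, y ∉ b := by
        obtain ⟨y, -, hy⟩ := Finset.exists_of_ssubset (Finset.ssubset_univ_iff.2 (hT.1 b hbT).2.1)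
        exact ⟨y, hy⟩
      have hbw : b ⊆ univ.erase y := by
        intro z hz
        exact Finset.mem_erase.2 ⟨fun h => hy (h ▸ hz), Finset.mem_univ z⟩
      have hcw : (univ.erase y : Finset (Fin (n+1))).card = n := by
        rw [Finset.card_erase_of_mem (Finset.mem_univ y)]; simp
      obtain ⟨u, hu1, hu2, hu3⟩ :=
        Finset.exists_subsuperset_card_eq (n := k) hbw (by omega) (by omega)
      refine ⟨u, hu1, hu3, ?_, by simp [hAe]⟩
      intro h
      have : y ∈ u := h ▸ Finset.mem_univ y
      exact (Finset.mem_erase.1 (hu2 this)).1 rfl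
    · obtain ⟨a, haA, hamin⟩ := Finset.exists_min_image A Finset.card hAne
      obtain ⟨haT, ha0, hak⟩ := Finset.mem_filter.1 haA
      have ha_all : ∀ c ∈ A, a ⊆ c := by
        intro c hc
        obtain ⟨hcT, hc0, -⟩ := Finset.mem_filter.1 hc
        rcases nested_of_mem hT haT hcT (Or.inl ha0) with h | h
        · exact h
        · exact le_of_eq (Finset.eq_of_subset_of_card_le h (hamin c hc)).symm
      have hba : b ⊆ a := by
        rcases nested_of_mem hT hbT haT (Or.inl hb0) with h | h
        · exact h
        · exact absurd (Finset.card_le_card h) (by omega)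
      obtain ⟨u, hu1, hu2, hu3⟩ :=
        Finset.exists_subsuperset_card_eq (n := k) hba (by omega) (by omega)
      refine ⟨u, hu1, hu3, ?_, fun c hc => hu2.trans (ha_all c hc)⟩
      intro h
      have h4 : u.card = n + 1 := by rw [h, Finset.card_univ, Fintype.card_fin]
      omega
  obtain ⟨u, hbu, hucard, huuniv, huA⟩ := hstep
  have h0u : (0:Fin (n+1)) ∈ u := hbu (hbm (Finset.mem_insert_self _ _))
  have key : ∀ c ∈ T, u ⊆ c ∨ c ⊆ u := by
    intro c hc
    rcases classify hT hc with ⟨hc0, -⟩ | ⟨x, hx, rfl⟩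
    · rcases hAB c hc hc0 with h | h
      · exact Or.inr ((hb_all c h).trans hbu)
      · exact Or.inl (huA c h)
    · refine Or.inr (Finset.singleton_subset_iff.2 (hbu (hbm ?_)))
      exact Finset.mem_insert_of_mem (Finset.mem_image_of_mem _ hx)
  have htub := insert_tubing hT (isTube_iff.2 (Or.inl ⟨huuniv, h0u⟩)) key
  have heq := hmax _ htub (Finset.subset_insert _ _)
  have h2 := Finset.mem_insert_self u T
  rw [heq] at h2
  exact hcon u h2 h0u hucard

end Surj

section Surj2
variable {T : Finset (Finset (Fin (n+1)))}

lemma FF_surjective (hT : IsTubingF (St n) T)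
    (hmax : ∀ U, IsTubingF (St n) U → T ⊆ U → U = T) :
    ∃ d : Dat n, FF d = T := by
  classical
  have hsn : (Sset T).card ≤ n := S_card_le (Sset T)
  rcases eq_or_lt_of_le hsn with hseq | hslt
  · -- S = univ: only singletons
    have hSuniv : Sset T = univ := Finset.eq_univ_of_card _ (by simp [hseq])
    have hie1 : IsEmpty {x : Fin n // x ∉ Sset T} :=
      ⟨fun x => x.2 (Finset.eq_univ_iff_forall.1 hSuniv x.1)⟩
    have hie2 : IsEmpty (Fin (n - (Sset T).card)) :=
      ⟨fun i => absurd i.isLt (by omega)⟩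
    refine ⟨⟨Sset T, @Equiv.equivOfIsEmpty _ _ hie1 hie2⟩, ?_⟩
    ext u
    rw [mem_FF']
    constructor
    · rintro (⟨x, hx, rfl⟩ | ⟨t, ht, rfl⟩)
      · exact mem_Sset.1 hx
      · omega
    · intro hu
      rcases classify hT hu with ⟨h0u, huuniv⟩ | ⟨x, hx, rfl⟩
      · exfalso
        apply huuniv
        rw [Finset.eq_univ_iff_forall]
        intro y
        by_cases hy0 : y = 0
        · exact hy0 ▸ h0u
        · obtain ⟨x, rfl⟩ := Fin.exists_succ_eq.2 hy0
          exact singleton_subset_of_zero hT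
            (mem_Sset.1 (Finset.eq_univ_iff_forall.1 hSuniv x)) hu h0u (Fin.succ_ne_zero x)
      · exact Or.inl ⟨x, hx, rfl⟩
  · -- main case
    have hex' : ∀ k : ℕ, ∃ c : Finset (Fin (n+1)),
        (Sset T).card + 1 ≤ k → k ≤ n → (c ∈ T ∧ (0:Fin (n+1)) ∈ c ∧ c.card = k) := by
      intro k
      by_cases h : (Sset T).card + 1 ≤ k ∧ k ≤ n
      · obtain ⟨c, hc1, hc2, hc3⟩ := exists_zero_tube hT hmax h.1 h.2
        exact ⟨c, fun _ _ => ⟨hc1, hc2, hc3⟩⟩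
      · exact ⟨∅, fun h1 h2 => absurd ⟨h1, h2⟩ h⟩
    choose cc hcc using hex'
    set ccx : ℕ → Finset (Fin (n+1)) := fun k => if k ≤ n then cc k else univ with hccxdef
    have hccx_mem : ∀ k, (Sset T).card + 1 ≤ k → k ≤ n →
        ccx k ∈ T ∧ (0:Fin (n+1)) ∈ ccx k ∧ (ccx k).card = k := by
      intro k h1 h2
      simp only [hccxdef, if_pos h2]
      exact hcc k h1 h2
    have hccx_card : ∀ k, (Sset T).card + 1 ≤ k → k ≤ n+1 → (ccx k).card = k := by
      intro k h1 h2
      rcases Nat.lt_or_ge k (n+1) with h | h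
      · exact (hccx_mem k h1 (by omega)).2.2
      · have hk : k = n+1 := by omega
        subst hk
        simp only [hccxdef, if_neg (by omega : ¬ n+1 ≤ n)]
        simp
    have hccx_mono : ∀ k k', (Sset T).card + 1 ≤ k → k ≤ k' → k' ≤ n+1 → ccx k ⊆ ccx k' := by
      intro k k' h1 h2 h3
      rcases Nat.lt_or_ge k' (n+1) with h | h
      · have hk := hccx_mem k h1 (by omega)
        have hk' := hccx_mem k' (by omega) (by omega)
        rcases nested_of_mem hT hk.1 hk'.1 (Or.inl hk.2.1) with hh | hh
        · exact hh
        · exact le_of_eq (Finset.eq_of_subset_of_card_le hh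
            (by rw [hk.2.2, hk'.2.2]; omega)).symm
      · have hk : k' = n+1 := by omega
        subst hk
        have : ccx (n+1) = univ := by simp only [hccxdef, if_neg (by omega : ¬ n+1 ≤ n)]
        rw [this]
        exact Finset.subset_univ _
    have hccx_eq : ∀ c ∈ T, (0:Fin (n+1)) ∈ c → ccx c.card = c := by
      intro c hc h0
      obtain ⟨h1, h2⟩ := card_zero_tube hT hc h0
      have h3 := hccx_mem c.card h1 h2
      exact zero_tube_unique hT h3.1 hc h3.2.1 h0 h3.2.2
    have hmmem : mset T ∈ T := mset_mem hT hmax (by omega)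
    have hm0 : (0:Fin (n+1)) ∈ mset T := Finset.mem_insert_self _ _
    have hmccx : ccx ((Sset T).card + 1) = mset T := by
      have h4 := hccx_eq (mset T) hmmem hm0
      rwa [card_mset] at h4
    have hmsub : ∀ t : ℕ, t ≤ n - (Sset T).card - 1 → mset T ⊆ ccx ((Sset T).card + 1 + t) := by
      intro t ht
      rw [← hmccx]
      exact hccx_mono _ _ le_rfl (by omega) (by omega)
    have hg' : ∀ t : ℕ, ∃ y : Fin (n+1), t ≤ n - (Sset T).card - 1 →
        ccx ((Sset T).card + 2 + t) \ ccx ((Sset T).card + 1 + t) = {y} := by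
      intro t
      by_cases ht : t ≤ n - (Sset T).card - 1
      · have hsub : ccx ((Sset T).card + 1 + t) ⊆ ccx ((Sset T).card + 2 + t) :=
          hccx_mono _ _ (by omega) (by omega) (by omega)
        have hcard : (ccx ((Sset T).card + 2 + t) \ ccx ((Sset T).card + 1 + t)).card = 1 := by
          rw [Finset.card_sdiff_of_subset hsub, hccx_card _ (by omega) (by omega),
            hccx_card _ (by omega) (by omega)]
          omega
        obtain ⟨y, hy⟩ := Finset.card_eq_one.1 hcard
        exact ⟨y, fun _ => hy⟩
      · exact ⟨0, fun h => absurd h ht⟩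
    choose g hg using hg'
    have hgmem : ∀ t : ℕ, t ≤ n - (Sset T).card - 1 →
        g t ∈ ccx ((Sset T).card + 2 + t) ∧ g t ∉ ccx ((Sset T).card + 1 + t) := by
      intro t ht
      have h2 : g t ∈ ccx ((Sset T).card + 2 + t) \ ccx ((Sset T).card + 1 + t) :=
        (hg t ht) ▸ Finset.mem_singleton_self _
      exact ⟨(Finset.mem_sdiff.1 h2).1, (Finset.mem_sdiff.1 h2).2⟩
    have hgne : ∀ t : ℕ, t ≤ n - (Sset T).card - 1 → g t ≠ 0 := by
      intro t ht h0
      exact (hgmem t ht).2 (h0 ▸ (hmsub t ht hm0))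
    have hgS : ∀ t : ℕ, t ≤ n - (Sset T).card - 1 → ∀ x : Fin n,
        Fin.succ x = g t → x ∉ Sset T := by
      intro t ht x hx hxS
      apply (hgmem t ht).2
      have h5 : Fin.succ x ∈ mset T :=
        Finset.mem_insert_of_mem (Finset.mem_image_of_mem _ hxS)
      rw [hx] at h5
      exact hmsub t ht h5
    have hggex : ∀ t : Fin (n - (Sset T).card),
        ∃ x : {x : Fin n // x ∉ Sset T}, Fin.succ x.1 = g (t:ℕ) := by
      intro t
      have ht : (t:ℕ) ≤ n - (Sset T).card - 1 := by have := t.isLt; omega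
      obtain ⟨x, hx⟩ := Fin.exists_succ_eq.2 (hgne _ ht)
      exact ⟨⟨x, hgS _ ht x hx⟩, hx⟩
    choose gg hgg2 using hggex
    have hkey : ∀ t t' : Fin (n - (Sset T).card), (t:ℕ) < (t':ℕ) → g (t:ℕ) ≠ g (t':ℕ) := by
      intro t t' hlt heq
      have ht : (t:ℕ) ≤ n - (Sset T).card - 1 := by have := t.isLt; omega
      have ht' : (t':ℕ) ≤ n - (Sset T).card - 1 := by have := t'.isLt; omega
      have h1 : g (t:ℕ) ∈ ccx ((Sset T).card + 1 + (t':ℕ)) :=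
        hccx_mono ((Sset T).card + 2 + (t:ℕ)) _ (by omega) (by omega) (by omega) (hgmem _ ht).1
      rw [heq] at h1
      exact (hgmem _ ht').2 h1
    have hgg_inj : Function.Injective gg := by
      intro t t' h
      have hg_eq : g (t:ℕ) = g (t':ℕ) := by rw [← hgg2 t, ← hgg2 t', h]
      rcases lt_trichotomy (t:ℕ) (t':ℕ) with hlt | heqv | hlt
      · exact absurd hg_eq (hkey t t' hlt)
      · exact Fin.ext heqv
      · exact absurd hg_eq.symm (hkey t' t hlt)
    have hcard_sub : Fintype.card {x : Fin n // x ∉ Sset T} = n - (Sset T).card := by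
      rw [Fintype.card_subtype_compl]
      simp
    have hgg_bij : Function.Bijective gg :=
      (Fintype.bijective_iff_injective_and_card gg).2 ⟨hgg_inj, by simp [hcard_sub]⟩
    set e := (Equiv.ofBijective gg hgg_bij).symm with he
    have hge : ∀ x : {x : Fin n // x ∉ Sset T}, g ((e x : Fin (n - (Sset T).card)) : ℕ) = Fin.succ x.1 := by
      intro x
      have h5 : gg (e x) = x := (Equiv.ofBijective gg hgg_bij).apply_symm_apply x
      rw [← hgg2 (e x), h5]
    have hmemc : ∀ (x : {x : Fin n // x ∉ Sset T}) (k : ℕ),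
        (Sset T).card + 1 ≤ k → k ≤ n+1 →
        (Fin.succ x.1 ∈ ccx k ↔ ((e x : Fin (n - (Sset T).card)) : ℕ) + (Sset T).card + 2 ≤ k) := by
      intro x k h1 h2
      have ht : ((e x : Fin (n - (Sset T).card)) : ℕ) ≤ n - (Sset T).card - 1 := by
        have := (e x).isLt; omega
      have hx_eq : Fin.succ x.1 = g ((e x : Fin (n - (Sset T).card)) : ℕ) := (hge x).symm
      constructor
      · intro hmem
        by_contra hcon2
        push_neg at hcon2
        have hsub : ccx k ⊆ ccx ((Sset T).card + 1 + ((e x : Fin (n - (Sset T).card)) : ℕ)) :=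
          hccx_mono _ _ (by omega) (by omega) (by omega)
        exact (hgmem _ ht).2 (hx_eq ▸ (hsub hmem))
      · intro hk
        have hsub : ccx ((Sset T).card + 2 + ((e x : Fin (n - (Sset T).card)) : ℕ)) ⊆ ccx k :=
          hccx_mono _ _ (by omega) (by omega) (by omega)
        rw [hx_eq]
        exact hsub (hgmem _ ht).1
    have hKeq : ∀ t : ℕ, t < n - (Sset T).card →
        K (Sset T) e t = ccx ((Sset T).card + 1 + t) := by
      intro t ht
      ext y
      rw [mem_K]
      constructor
      · rintro (rfl | ⟨x, rfl, hx | ⟨hxS, hlt2⟩⟩)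
        · exact (hccx_mem _ (by omega) (by omega)).2.1
        · exact hmsub t (by omega)
            (Finset.mem_insert_of_mem (Finset.mem_image_of_mem _ hx))
        · exact (hmemc ⟨x, hxS⟩ ((Sset T).card + 1 + t) (by omega) (by omega)).2 (by omega)
      · intro hy
        by_cases hy0 : y = 0
        · exact Or.inl hy0
        · obtain ⟨x, rfl⟩ := Fin.exists_succ_eq.2 hy0
          by_cases hxS : x ∈ Sset T
          · exact Or.inr ⟨x, rfl, Or.inl hxS⟩
          · have h6 := (hmemc ⟨x, hxS⟩ ((Sset T).card + 1 + t) (by omega) (by omega)).1 hy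
            exact Or.inr ⟨x, rfl, Or.inr ⟨hxS, by omega⟩⟩
    refine ⟨⟨Sset T, e⟩, ?_⟩
    ext u
    rw [mem_FF']
    constructor
    · rintro (⟨x, hx, rfl⟩ | ⟨t, ht, rfl⟩)
      · exact mem_Sset.1 hx
      · rw [hKeq t ht]
        exact (hccx_mem _ (by omega) (by omega)).1
    · intro hu
      rcases classify hT hu with ⟨h0u, huuniv⟩ | ⟨x, hx, rfl⟩
      · right
        obtain ⟨h1, h2⟩ := card_zero_tube hT hu h0u
        refine ⟨u.card - (Sset T).card - 1, by omega, ?_⟩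
        rw [hKeq _ (by omega),
          (by omega : (Sset T).card + 1 + (u.card - (Sset T).card - 1) = u.card)]
        exact (hccx_eq u hu h0u).symm
      · exact Or.inl ⟨x, hx, rfl⟩

end Surj2

lemma singleton_mem_FF {S : Finset (Fin n)} {e : {x : Fin n // x ∉ S} ≃ Fin (n - S.card)}
    {x : Fin n} : ({Fin.succ x} : Finset (Fin (n+1))) ∈ FF ⟨S, e⟩ ↔ x ∈ S := by
  rw [mem_FF']
  constructor
  · rintro (⟨x', hx', heq⟩ | ⟨t, ht, heq⟩)
    · rwa [Fin.succ_injective n (Finset.singleton_injective heq)]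
    · exfalso
      have h0 : (0 : Fin (n+1)) ∈ ({Fin.succ x} : Finset (Fin (n+1))) := by
        rw [heq]; exact zero_mem_K
      exact Fin.succ_ne_zero x (Finset.mem_singleton.1 h0).symm
  · intro hx
    exact Or.inl ⟨x, hx, rfl⟩

lemma FF_injective : Function.Injective (FF : Dat n → Finset (Finset (Fin (n+1)))) := by
  rintro ⟨S, e⟩ ⟨S', e'⟩ h
  have hS : S = S' := by
    ext x
    rw [← singleton_mem_FF (e := e), ← singleton_mem_FF (e := e'), h]
  subst hS
  refine congrArg (Sigma.mk S) (Equiv.ext ?_)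
  rintro ⟨x, hx⟩
  have hKK : ∀ t, t < n - S.card → K S e t = K S e' t := by
    intro t ht
    have hmem : K S e t ∈ FF ⟨S, e'⟩ := by
      rw [← h]; exact mem_FF'.2 (Or.inr ⟨t, ht, rfl⟩)
    rcases mem_FF'.1 hmem with ⟨x', hx', heq⟩ | ⟨t', ht', heq⟩
    · exfalso
      have h0 : (0 : Fin (n+1)) ∈ ({Fin.succ x'} : Finset (Fin (n+1))) := by
        rw [← heq]; exact zero_mem_K
      exact Fin.succ_ne_zero x' (Finset.mem_singleton.1 h0).symm
    · have hc1 : (K S e t).card = S.card + t + 1 := card_K e ht.le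
      have hc2 : (K S e' t').card = S.card + t' + 1 := card_K e' ht'.le
      have : t = t' := by rw [heq] at hc1; omega
      rw [heq, this]
  have hiff : ∀ t, t < n - S.card → ((e ⟨x, hx⟩ : ℕ) < t ↔ (e' ⟨x, hx⟩ : ℕ) < t) := by
    intro t ht
    have h1 := succ_mem_K (e := e) (t := t) (x := x)
    have h2 := succ_mem_K (e := e') (t := t) (x := x)
    rw [hKK t ht] at h1
    constructor
    · intro hlt
      rcases h2.1 (h1.2 (Or.inr ⟨hx, hlt⟩)) with hc | ⟨h', hlt'⟩
      · exact absurd hc hx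
      · exact hlt'
    · intro hlt
      rcases h1.1 (h2.2 (Or.inr ⟨hx, hlt⟩)) with hc | ⟨h', hlt'⟩
      · exact absurd hc hx
      · exact hlt'
  have hv1 : ((e ⟨x, hx⟩ : Fin (n - S.card)) : ℕ) < n - S.card := (e ⟨x, hx⟩).isLt
  have hv2 : ((e' ⟨x, hx⟩ : Fin (n - S.card)) : ℕ) < n - S.card := (e' ⟨x, hx⟩).isLt
  have : ((e ⟨x, hx⟩ : Fin (n - S.card)) : ℕ) = ((e' ⟨x, hx⟩ : Fin (n - S.card)) : ℕ) := by
    rcases lt_trichotomy ((e ⟨x, hx⟩ : Fin (n - S.card)) : ℕ) ((e' ⟨x, hx⟩ : Fin (n - S.card)) : ℕ)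
      with hlt | heqv | hlt
    · have := (hiff _ (by omega)).1 (by omega : (e ⟨x, hx⟩ : ℕ) < (e ⟨x, hx⟩ : ℕ) + 1)
      omega
    · exact heqv
    · have := (hiff _ (by omega)).2 (by omega : (e' ⟨x, hx⟩ : ℕ) < (e' ⟨x, hx⟩ : ℕ) + 1)
      omega
  exact Fin.ext this

lemma card_dat : Nat.card (Dat n) = ∑ k ∈ range (n + 1), n ! / k ! := by
  classical
  rw [Nat.card_eq_fintype_card]
  have h1 : Fintype.card (Dat n) =
      ∑ S : Finset (Fin n), Fintype.card ({x : Fin n // x ∉ S} ≃ Fin (n - S.card)) := by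
    unfold Dat
    rw [Fintype.card_sigma]
  have h2 : ∀ S : Finset (Fin n),
      Fintype.card ({x : Fin n // x ∉ S} ≃ Fin (n - S.card)) = (n - S.card)! := by
    intro S
    have hc : Fintype.card {x : Fin n // x ∉ S} = n - S.card := by
      rw [Fintype.card_subtype_compl]; simp
    rw [Fintype.card_equiv (Fintype.equivFinOfCardEq hc), hc]
  rw [h1]
  simp_rw [h2]
  have h3 : ∑ S : Finset (Fin n), (n - S.card)! =
      ∑ S ∈ (univ : Finset (Fin n)).powerset, (n - S.card)! := by
    rw [Finset.powerset_univ]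
  rw [h3, Finset.sum_powerset]
  have h4 : ∀ j ∈ range ((univ : Finset (Fin n)).card + 1),
      (∑ S ∈ Finset.powersetCard j (univ : Finset (Fin n)), (n - S.card)!) = n ! / j ! := by
    intro j hj
    have hjn : j ≤ n := by
      have := Finset.mem_range.1 hj
      simpa using Nat.lt_succ_iff.1 (by simpa using this)
    have h5 : (∑ S ∈ Finset.powersetCard j (univ : Finset (Fin n)), (n - S.card)!) =
        ((univ : Finset (Fin n)).card.choose j) • (n - j)! := by
      rw [← Finset.sum_powersetCard j (univ : Finset (Fin n)) (fun k => (n - k)!)]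
    rw [h5]
    simp only [Finset.card_univ, Fintype.card_fin, smul_eq_mul]
    symm
    apply Nat.div_eq_of_eq_mul_left (Nat.factorial_pos j)
    rw [← Nat.choose_mul_factorial_mul_factorial hjn]
    ring
  rw [Finset.sum_congr rfl h4]
  simp

end StarProof

open StarProof in
/-- The number of maximal tubings of the star graph `St_n` (the vertices of the
stellohedron) is `∑_{k=0}^n n!/k!`. -/
theorem card_maxTubings_star (n : ℕ) :
    Nat.card {T : Finset (Finset (Fin (n + 1))) //
        IsTubingF (St n) T ∧ ∀ U, IsTubingF (St n) U → T ⊆ U → U = T} =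
      ∑ k ∈ range (n + 1), n ! / k ! := by
  rw [← card_dat]
  symm
  apply Nat.card_eq_of_bijective
    (fun d => ⟨FF d, FF_isTubing d, fun U hU hsub => FF_maximal d U hU hsub⟩)
  constructor
  · intro d d' h
    exact FF_injective (congrArg Subtype.val h)
  · rintro ⟨T, hT, hmax⟩
    obtain ⟨d, hd⟩ := FF_surjective hT hmax
    exact ⟨d, Subtype.ext hd⟩
end
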